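/- arXiv:0707.4255 — 5 statements merged into one kernel-verified Lean document; each statement's English description precedes it below -/
import Mathlib

section
/- There is an absolute constant c > 0 such that for every unsatisfiable CNF formula K over n variables all of whose clauses have width at most r, it holds that S(K) ≥ exp(c · (w(K) − r)² / n). -/
open scoped Classical

/-- Propositional variables are natural numbers. -/
abbrev Var := ℕ

/-- A literal: a variable with a polarity (`true` = positive occurrence). -/
abbrev Lit := Var × Bool

/-- A clause: a finite set of literals. -/
abbrev Clause := Finset Lit

/-- A CNF formula: a finite collection of clauses. -/
abbrev CNF := Finset Clause

/-- A truth assignment to all variables. -/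
abbrev Assignment := Var → Bool

/-- A clause is proper if it contains no variable together with its negation. -/
def Clause.Proper (C : Clause) : Prop := ∀ v : Var, ¬((v, true) ∈ C ∧ (v, false) ∈ C)

/-- The set of variables occurring in a clause. -/
def Clause.vars (C : Clause) : Finset Var := C.image Prod.fst

/-- The set of variables occurring in a CNF formula. -/
def CNF.vars (K : CNF) : Finset Var := K.sup Clause.vars

/-- Every clause of the CNF is a proper clause. -/
def CNF.Proper (K : CNF) : Prop := ∀ C ∈ K, Clause.Proper C

/-- Evaluation of a literal under an assignment. -/
def Lit.eval (a : Assignment) (l : Lit) : Bool := if l.2 then a l.1 else !(a l.1)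

/-- An assignment satisfies a clause if it makes some literal of it true. -/
def Clause.Sat (a : Assignment) (C : Clause) : Prop := ∃ l ∈ C, Lit.eval a l = true

/-- An assignment satisfies a CNF if it satisfies every clause. -/
def CNF.Sat (a : Assignment) (K : CNF) : Prop := ∀ C ∈ K, Clause.Sat a C

/-- A CNF formula is unsatisfiable. -/
def CNF.Unsat (K : CNF) : Prop := ¬∃ a : Assignment, CNF.Sat a K

/-- A 3CNF: every clause has exactly 3 literals over 3 distinct variables. -/
def Is3CNF (K : CNF) : Prop := ∀ C ∈ K, C.card = 3 ∧ (Clause.vars C).card = 3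

/-- One admissible step in a resolution derivation from the CNF `K`, given the
list `prev` of earlier clauses: `D` is a clause of `K`, or is obtained by
weakening from an earlier clause, or is the resolvent `C ∨ C'` of two earlier
clauses `C ∨ x` and `C' ∨ ¬x` where the variable `x` occurs in neither `C`
nor `C'`. -/
def ResStep (K : CNF) (prev : List Clause) (D : Clause) : Prop :=
  D ∈ K ∨ (∃ E ∈ prev, E ⊆ D) ∨
    (∃ C₁ ∈ prev, ∃ C₂ ∈ prev, ∃ x : Var,
      (x, true) ∈ C₁ ∧ (x, false) ∈ C₂ ∧
      D = C₁.erase (x, true) ∪ C₂.erase (x, false) ∧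
      (x, true) ∉ D ∧ (x, false) ∉ D)

/-- A resolution derivation of the clause `D` from the CNF `K`: a nonempty
sequence of (proper) clauses, each a clause of `K`, a weakening of an earlier
clause, or a resolvent of two earlier clauses, ending with `D`.  Its size is
the length of the list. -/
def IsResDerivation (K : CNF) (L : List Clause) (D : Clause) : Prop :=
  L ≠ [] ∧ L.getLast? = some D ∧
    ∀ i : Fin L.length, Clause.Proper (L.get i) ∧ ResStep K (L.take i.val) (L.get i)

/-- A resolution refutation of `K`: a derivation of the empty clause from `K`. -/
def IsResRefutation (K : CNF) (L : List Clause) : Prop := IsResDerivation K L ∅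

/-- Extend an assignment of the variables X = {0, …, n-1} to all variables
(by `false` elsewhere). -/
def extendAssign {n : ℕ} (a : Fin n → Bool) : Assignment :=
  fun v => if h : v < n then a ⟨v, h⟩ else false

/-- The set of assignments to the n variables X = {0, …, n-1} satisfying `K`
(for `K` with variables among X this is the set of satisfying assignments of `K`). -/
def satSet (n : ℕ) (K : CNF) : Set (Fin n → Bool) := {a | CNF.Sat (extendAssign a) K}

/-- The CNF `A` (over X = {0, …, n-1} together with extension variables) discards the
assignment `a` to X if no extension of `a` to all remaining variables satisfies `A`. -/
def Discards (n : ℕ) (A : CNF) (a : Fin n → Bool) : Prop :=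
  ¬∃ b : Assignment, (∀ i : Fin n, b i.val = a i) ∧ CNF.Sat b A

/-- The set of assignments to X = {0, …, n-1} discarded by `A`. -/
def discardedSet (n : ℕ) (A : CNF) : Set (Fin n → Bool) := {a | Discards n A a}

/-- The minimal size of a resolution refutation of `K`. -/
noncomputable def resSize (K : CNF) : ℕ :=
  sInf {s : ℕ | ∃ L : List Clause, IsResRefutation K L ∧ L.length = s}

/-- The maximal width of a clause in a derivation. -/
def listWidth (L : List Clause) : ℕ := (L.map Finset.card).foldr max 0

/-- The minimal, over all resolution refutations of `K`, of the maximal width of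
a clause appearing in the refutation. -/
noncomputable def resWidth (K : CNF) : ℕ :=
  sInf {w : ℕ | ∃ L : List Clause, IsResRefutation K L ∧ listWidth L = w}

/-!
Call a clause *fat* if its width exceeds `d`. If `K` has a refutation with `F` fat clauses, pick
a literal `l` occurring in at least a `(d + 1) / 2n` fraction of them (pigeonhole over the `2n`
literals). Restricting the refutation by `l := true` kills these fat clauses; restricting by
`l := false` kills a variable. Refutations of `K|_{l = true}` of width `W - 1` and of
`K|_{l = false}` of width `W` combine into one of `K` of width `W` (for `W ≥ r`): add `¬l` to
every clause of the first to derive the unit `¬l`, resolve it against `K` to obtain the clauses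
of `K|_{l = false}`, then replay the second. By induction on `t` and on the number of variables,
`(1 - (d + 1) / 2n)^t F < 1` forces a refutation of width at most `r + d + t`. Taking `F = S(K)`
and `d = t = ⌈√(2n ln S(K))⌉` gives `w(K) ≤ r + 2d`, that is `S(K) ≥ exp((w(K) - r)² / 32n)`.
-/

namespace Clause

lemma Proper.mono {C D : Clause} (h : C ⊆ D) (hD : D.Proper) : C.Proper :=
  fun v hv => hD v ⟨h hv.1, h hv.2⟩

lemma proper_empty : Clause.Proper ∅ := fun v hv => by simp at hv

end Clause

lemma List.forall_take_get_concat_iff {α : Type*} (P : List α → α → Prop) (L : List α) (a : α) :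
    (∀ i : Fin (L ++ [a]).length, P ((L ++ [a]).take i) ((L ++ [a]).get i)) ↔
      (∀ i : Fin L.length, P (L.take i) (L.get i)) ∧ P L a := by
  constructor
  · intro h
    refine ⟨fun i => ?_, ?_⟩
    · simpa [List.take_append_of_le_length i.isLt.le, List.getElem_append_left i.isLt]
        using h ⟨i, by simp⟩
    · simpa using h ⟨L.length, by simp⟩
  · rintro ⟨h, ha⟩ ⟨i, hi⟩
    rcases Nat.lt_or_ge i L.length with hiL | hiL
    · simpa [List.take_append_of_le_length hiL.le, List.getElem_append_left hiL] using h ⟨i, hiL⟩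
    · obtain rfl : i = L.length := by simp at hi; omega
      simpa using ha

inductive ResSeq (K : CNF) : List Clause → Prop
  | nil : ResSeq K []
  | snoc (L : List Clause) (D : Clause) : ResSeq K L → D.Proper → ResStep K L D →
      ResSeq K (L ++ [D])

lemma ResStep.mono {K : CNF} {prev prev' : List Clause} {D : Clause}
    (h : ∀ C ∈ prev, C ∈ prev') : ResStep K prev D → ResStep K prev' D := by
  rintro (hD | ⟨E, hE, hED⟩ | ⟨C₁, h₁, C₂, h₂, x, hx₁, hx₂, hD, hn₁, hn₂⟩)
  · exact Or.inl hD
  · exact Or.inr (Or.inl ⟨E, h _ hE, hED⟩)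
  · exact Or.inr (Or.inr ⟨C₁, h _ h₁, C₂, h _ h₂, x, hx₁, hx₂, hD, hn₁, hn₂⟩)

lemma ResStep.of_resolve {K : CNF} {prev : List Clause} {C₁ C₂ D : Clause} {x : Var} {b : Bool}
    (h₁ : C₁ ∈ prev) (h₂ : C₂ ∈ prev) (hx₁ : (x, b) ∈ C₁) (hx₂ : (x, !b) ∈ C₂)
    (hD : D = C₁.erase (x, b) ∪ C₂.erase (x, !b)) (hn₁ : (x, b) ∉ D) (hn₂ : (x, !b) ∉ D) :
    ResStep K prev D := by
  cases b
  · exact Or.inr (Or.inr ⟨C₂, h₂, C₁, h₁, x, hx₂, hx₁, hD.trans (Finset.union_comm _ _), hn₂, hn₁⟩)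
  · exact Or.inr (Or.inr ⟨C₁, h₁, C₂, h₂, x, hx₁, hx₂, hD, hn₁, hn₂⟩)

namespace ResSeq

variable {K : CNF}

lemma proper {L : List Clause} (h : ResSeq K L) : ∀ C ∈ L, C.Proper := by
  induction h with
  | nil => simp
  | snoc L D _ hD _ ih =>
      simp only [List.mem_append, List.mem_singleton]
      rintro C (hC | rfl)
      exacts [ih C hC, hD]

lemma append_of_forall_resStep {B M : List Clause} (hB : ResSeq K B)
    (hM : ∀ D ∈ M, D.Proper ∧ ResStep K B D) : ResSeq K (B ++ M) := by
  induction M using List.reverseRecOn with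
  | nil => simpa using hB
  | append_singleton M D ih =>
      rw [← List.append_assoc]
      refine snoc _ _ (ih fun D hD => hM D (by simp [hD])) (hM D (by simp)).1 ?_
      exact (hM D (by simp)).2.mono fun C hC => List.mem_append_left _ hC

lemma of_forall_mem_cnf (hK : CNF.Proper K) {L : List Clause} (h : ∀ C ∈ L, C ∈ K) :
    ResSeq K L := by
  simpa using append_of_forall_resStep nil fun D hD => ⟨hK D (h D hD), Or.inl (h D hD)⟩

lemma append_map_filter {K' : CNF} (f : Clause → Clause) (P : Clause → Bool) (Q : Clause → Prop)
    {B : List Clause} (hB : ResSeq K' B)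
    (hproper : ∀ D, D.Proper → Q D → P D → (f D).Proper)
    (hstep : ∀ (prev : List Clause) (D : Clause), (∀ C ∈ prev, C.Proper ∧ Q C) →
        D.Proper → Q D → P D → ResStep K prev D →
        ResStep K' (B ++ (prev.filter P).map f) (f D))
    {L : List Clause} (hL : ResSeq K L) (hQ : ∀ C ∈ L, Q C) :
    ResSeq K' (B ++ (L.filter P).map f) := by
  induction hL with
  | nil => simpa using hB
  | snoc L D hL hD hR ih =>
      have hQL : ∀ C ∈ L, Q C := fun C hC => hQ C (List.mem_append_left _ hC)
      have hQD : Q D := hQ D (by simp)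
      rw [List.filter_append]
      by_cases hPD : P D
      · rw [List.filter_singleton, hPD, cond_true, List.map_append, ← List.append_assoc]
        exact snoc _ _ (ih hQL) (hproper D hD hQD hPD)
          (hstep L D (fun C hC => ⟨hL.proper C hC, hQL C hC⟩) hD hQD hPD hR)
      · simpa [List.filter_singleton, hPD] using ih hQL

lemma append_of_subset_cnf {R : CNF} {B M : List Clause} (hB : ResSeq K B)
    (hcov : ∀ C ∈ R, ∃ E ∈ B, E ⊆ C) (hM : ResSeq R M) : ResSeq K (B ++ M) := by
  have := append_map_filter id (fun _ => true) (fun _ => True) hB (fun D hD _ _ => hD)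
    (fun prev D _ _ _ _ hR => ?_) hM (fun _ _ => trivial)
  · simpa using this
  rcases hR with hD | hR
  · obtain ⟨E, hE, hED⟩ := hcov D hD
    exact Or.inr (Or.inl ⟨E, List.mem_append_left _ hE, hED⟩)
  · exact ResStep.mono (fun C hC => by simp [hC]) (Or.inr hR : ResStep K prev D)

lemma of_append_singleton {L : List Clause} {D : Clause} (h : ResSeq K (L ++ [D])) :
    ResSeq K L ∧ D.Proper ∧ ResStep K L D := by
  generalize hLD : L ++ [D] = L' at h
  obtain _ | ⟨L₀, D₀, hL₀, hD₀, hR₀⟩ := h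
  · simp at hLD
  · obtain ⟨rfl, hD⟩ := List.append_inj' hLD rfl
    obtain rfl : D = D₀ := by simpa using hD
    exact ⟨hL₀, hD₀, hR₀⟩

end ResSeq

lemma resSeq_iff {K : CNF} {L : List Clause} :
    ResSeq K L ↔ ∀ i : Fin L.length, (L.get i).Proper ∧ ResStep K (L.take i) (L.get i) := by
  induction L using List.reverseRecOn with
  | nil => exact ⟨fun _ i => i.elim0, fun _ => .nil⟩
  | append_singleton L D ih =>
      rw [List.forall_take_get_concat_iff (fun prev D => D.Proper ∧ ResStep K prev D), ← ih]
      exact ⟨ResSeq.of_append_singleton, fun ⟨hL, hD, hR⟩ => .snoc L D hL hD hR⟩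

lemma isResRefutation_iff {K : CNF} {L : List Clause} :
    IsResRefutation K L ↔ ResSeq K L ∧ ∃ L', L = L' ++ [∅] := by
  rw [IsResRefutation, IsResDerivation, ← resSeq_iff, List.getLast?_eq_some_iff]
  constructor
  · rintro ⟨-, h, hL⟩
    exact ⟨hL, h⟩
  · rintro ⟨hL, L', rfl⟩
    exact ⟨by simp, ⟨L', rfl⟩, hL⟩

lemma listWidth_le_iff {L : List Clause} {m : ℕ} :
    listWidth L ≤ m ↔ ∀ C ∈ L, C.card ≤ m := by
  induction L with
  | nil => simp [listWidth]
  | cons C L ih => simp [listWidth, ← ih]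

lemma card_le_listWidth {L : List Clause} {C : Clause} (h : C ∈ L) : C.card ≤ listWidth L :=
  listWidth_le_iff.1 le_rfl C h

namespace Clause

def drop (x : Var) (C : Clause) : Clause := C.filter (fun l => l.1 ≠ x)

lemma drop_subset (x : Var) (C : Clause) : drop x C ⊆ C := Finset.filter_subset _ _

lemma drop_mono (x : Var) {C D : Clause} (h : C ⊆ D) : drop x C ⊆ drop x D :=
  Finset.filter_subset_filter _ h

lemma drop_erase (x : Var) (b : Bool) (C : Clause) : drop x (C.erase (x, b)) = drop x C := by
  simp only [drop, Finset.filter_erase]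
  exact Finset.erase_eq_of_notMem (by simp)

lemma drop_eq_erase {C : Clause} {x : Var} {ε : Bool} (h : (x, !ε) ∉ C) :
    drop x C = C.erase (x, ε) := by
  ext ⟨v, b⟩
  simp only [drop, Finset.mem_filter, Finset.mem_erase, ne_eq, Prod.mk.injEq, not_and]
  constructor
  · rintro ⟨hl, hv⟩
    exact ⟨fun hv' => absurd hv' hv, hl⟩
  · rintro ⟨hb, hl⟩
    refine ⟨hl, fun hv => ?_⟩
    subst hv
    cases b <;> cases ε <;> simp_all

lemma drop_resolvent_left (x : Var) (C₁ C₂ : Clause) :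
    drop x C₁ ⊆ drop x (C₁.erase (x, true) ∪ C₂.erase (x, false)) := by
  rw [← drop_erase x true C₁]
  exact drop_mono x Finset.subset_union_left

lemma drop_resolvent_right (x : Var) (C₁ C₂ : Clause) :
    drop x C₂ ⊆ drop x (C₁.erase (x, true) ∪ C₂.erase (x, false)) := by
  rw [← drop_erase x false C₂]
  exact drop_mono x Finset.subset_union_right

end Clause

namespace CNF

/-- The restriction `K|_{x = ε}`. -/
def restrict (x : Var) (ε : Bool) (K : CNF) : CNF :=
  (K.filter (fun C => (x, ε) ∉ C)).image (Clause.drop x)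

variable {K : CNF} {x : Var} {ε : Bool}

lemma mem_restrict {D : Clause} :
    D ∈ K.restrict x ε ↔ ∃ C ∈ K, (x, ε) ∉ C ∧ Clause.drop x C = D := by
  simp [restrict, and_assoc]

lemma Proper.restrict (hK : K.Proper) (x : Var) (ε : Bool) : (K.restrict x ε).Proper := by
  intro D hD
  obtain ⟨C, hC, -, rfl⟩ := mem_restrict.1 hD
  exact (hK C hC).mono (Clause.drop_subset x C)

lemma card_le_of_mem_restrict {r : ℕ} (hK : ∀ C ∈ K, C.card ≤ r) :
    ∀ D ∈ K.restrict x ε, D.card ≤ r := by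
  intro D hD
  obtain ⟨C, hC, -, rfl⟩ := mem_restrict.1 hD
  exact (Finset.card_le_card (Clause.drop_subset x C)).trans (hK C hC)

lemma mem_vars {v : Var} : v ∈ K.vars ↔ ∃ C ∈ K, ∃ l ∈ C, l.1 = v := by
  simp [CNF.vars, Clause.vars]

lemma mem_vars_of_mem {C : Clause} {l : Lit} (hC : C ∈ K) (hl : l ∈ C) : l.1 ∈ K.vars :=
  mem_vars.2 ⟨C, hC, l, hl, rfl⟩

lemma vars_restrict_subset : (K.restrict x ε).vars ⊆ K.vars.erase x := by
  intro v hv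
  obtain ⟨D, hD, l, hl, rfl⟩ := mem_vars.1 hv
  obtain ⟨C, hC, -, rfl⟩ := mem_restrict.1 hD
  obtain ⟨hlC, hlx⟩ := Finset.mem_filter.1 hl
  exact Finset.mem_erase.2 ⟨hlx, mem_vars_of_mem hC hlC⟩

lemma notMem_vars_restrict : x ∉ (K.restrict x ε).vars :=
  fun h => (Finset.mem_erase.1 (vars_restrict_subset h)).1 rfl

lemma Unsat.restrict (hU : K.Unsat) (x : Var) (ε : Bool) : (K.restrict x ε).Unsat := by
  rintro ⟨a, ha⟩
  refine hU ⟨Function.update a x ε, fun C hC => ?_⟩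
  by_cases hx : (x, ε) ∈ C
  · exact ⟨(x, ε), hx, by cases ε <;> simp [Lit.eval]⟩
  · obtain ⟨l, hl, hev⟩ := ha _ (mem_restrict.2 ⟨C, hC, hx, rfl⟩)
    obtain ⟨hlC, hlx⟩ := Finset.mem_filter.1 hl
    refine ⟨l, hlC, ?_⟩
    simpa [Lit.eval, Function.update_of_ne hlx] using hev

lemma empty_mem_of_vars_eq_empty (hU : K.Unsat) (h : K.vars = ∅) : (∅ : Clause) ∈ K := by
  obtain ⟨C, hC⟩ : K.Nonempty := by
    rw [Finset.nonempty_iff_ne_empty]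
    rintro rfl
    exact hU ⟨fun _ => false, by simp [CNF.Sat]⟩
  obtain rfl : C = ∅ :=
    Finset.eq_empty_of_forall_notMem fun l hl => by simpa [h] using mem_vars_of_mem hC hl
  exact hC

end CNF

def projList (V : Finset Var) (L : List Clause) : List Clause :=
  L.map (fun C => C.filter (fun l => l.1 ∈ V))

def restrictList (x : Var) (ε : Bool) (L : List Clause) : List Clause :=
  (L.filter (fun C => decide ((x, ε) ∉ C))).map (Clause.drop x)

lemma mem_of_mem_projList {V : Finset Var} {L : List Clause} {C : Clause} {l : Lit}
    (hC : C ∈ projList V L) (hl : l ∈ C) : l.1 ∈ V := by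
  obtain ⟨C₀, -, rfl⟩ := List.mem_map.1 hC
  exact (Finset.mem_filter.1 hl).2

namespace ResStep

variable {K : CNF} {prev : List Clause} {D : Clause}

lemma restrictList {x : Var} {ε : Bool} (hprev : ∀ C ∈ prev, C.Proper) (hD : (x, ε) ∉ D)
    (hR : ResStep K prev D) :
    ResStep (K.restrict x ε) (restrictList x ε prev) (Clause.drop x D) := by
  have mem {C : Clause} (hC : C ∈ prev) (hCx : (x, ε) ∉ C) :
      Clause.drop x C ∈ _root_.restrictList x ε prev :=
    List.mem_map_of_mem (List.mem_filter.2 ⟨hC, by simpa using hCx⟩)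
  rcases hR with hK | ⟨E, hE, hED⟩ | ⟨C₁, h₁, C₂, h₂, y, hy₁, hy₂, rfl, hn₁, hn₂⟩
  · exact Or.inl (CNF.mem_restrict.2 ⟨D, hK, hD, rfl⟩)
  · exact Or.inr (Or.inl ⟨_, mem hE fun h => hD (hED h), Clause.drop_mono x hED⟩)
  by_cases hyx : y = x
  · -- the premise holding the literal falsified by `x := ε` has no other literal on `x`,
    -- so dropping `x` turns it into a weakening of the dropped resolvent
    subst hyx
    cases ε
    · exact Or.inr (Or.inl ⟨_, mem h₁ fun h => hprev C₁ h₁ y ⟨hy₁, h⟩,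
        Clause.drop_resolvent_left y C₁ C₂⟩)
    · exact Or.inr (Or.inl ⟨_, mem h₂ fun h => hprev C₂ h₂ y ⟨h, hy₂⟩,
        Clause.drop_resolvent_right y C₁ C₂⟩)
  · have hne (b : Bool) : (x, ε) ≠ (y, b) := fun h => hyx (congrArg Prod.fst h).symm
    refine Or.inr (Or.inr ⟨_, mem h₁ fun h => hD ?_, _, mem h₂ fun h => hD ?_, y,
      Finset.mem_filter.2 ⟨hy₁, hyx⟩, Finset.mem_filter.2 ⟨hy₂, hyx⟩, ?_,
      fun h => hn₁ (Clause.drop_subset x _ h), fun h => hn₂ (Clause.drop_subset x _ h)⟩)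
    · exact Finset.mem_union_left _ (Finset.mem_erase.2 ⟨hne true, h⟩)
    · exact Finset.mem_union_right _ (Finset.mem_erase.2 ⟨hne false, h⟩)
    · simp only [Clause.drop, Finset.filter_union, Finset.filter_erase]

lemma projList {V : Finset Var} (hKV : ∀ C ∈ K, ∀ l ∈ C, l.1 ∈ V) (hR : ResStep K prev D) :
    ResStep K (projList V prev) (D.filter (fun l => l.1 ∈ V)) := by
  have mem {C : Clause} (hC : C ∈ prev) : C.filter (fun l => l.1 ∈ V) ∈ _root_.projList V prev :=
    List.mem_map_of_mem hC
  rcases hR with hK | ⟨E, hE, hED⟩ | ⟨C₁, h₁, C₂, h₂, y, hy₁, hy₂, rfl, hn₁, hn₂⟩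
  · rw [Finset.filter_eq_self.2 (hKV D hK)]
    exact Or.inl hK
  · exact Or.inr (Or.inl ⟨_, mem hE, Finset.filter_subset_filter _ hED⟩)
  by_cases hyV : y ∈ V
  · exact Or.inr (Or.inr ⟨_, mem h₁, _, mem h₂, y, Finset.mem_filter.2 ⟨hy₁, hyV⟩,
      Finset.mem_filter.2 ⟨hy₂, hyV⟩, by simp only [Finset.filter_union, Finset.filter_erase],
      fun h => hn₁ (Finset.filter_subset _ _ h), fun h => hn₂ (Finset.filter_subset _ _ h)⟩)
  · refine Or.inr (Or.inl ⟨_, mem h₁, fun l hl => ?_⟩)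
    obtain ⟨hl, hlV⟩ := Finset.mem_filter.1 hl
    refine Finset.mem_filter.2 ⟨Finset.mem_union_left _ (Finset.mem_erase.2 ⟨?_, hl⟩), hlV⟩
    rintro rfl
    exact hyV hlV

end ResStep

namespace ResSeq

variable {K : CNF} {L : List Clause}

lemma restrictList (x : Var) (ε : Bool) (hL : ResSeq K L) :
    ResSeq (K.restrict x ε) (restrictList x ε L) :=
  append_map_filter (Clause.drop x) (fun C => decide ((x, ε) ∉ C)) (fun _ => True) nil
    (fun D hD _ _ => hD.mono (Clause.drop_subset x D))
    (fun _ _ hprev _ _ hPD hR =>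
      hR.restrictList (fun C hC => (hprev C hC).1) (of_decide_eq_true hPD))
    hL (fun _ _ => trivial)

lemma projList {V : Finset Var} (hKV : ∀ C ∈ K, ∀ l ∈ C, l.1 ∈ V) (hL : ResSeq K L) :
    ResSeq K (projList V L) := by
  simpa [_root_.projList] using append_map_filter (fun C => C.filter (fun l => l.1 ∈ V))
    (fun _ => true) (fun _ => True) nil (fun D hD _ _ => hD.mono (Finset.filter_subset _ _))
    (fun _ _ _ _ _ _ hR => by simpa [_root_.projList] using hR.projList hKV) hL
    (fun _ _ => trivial)

end ResSeq

namespace IsResRefutation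

variable {K : CNF} {L : List Clause}

lemma restrictList (x : Var) (ε : Bool) (hL : IsResRefutation K L) :
    IsResRefutation (K.restrict x ε) (restrictList x ε L) := by
  obtain ⟨hL, L', rfl⟩ := isResRefutation_iff.1 hL
  refine isResRefutation_iff.2 ⟨hL.restrictList x ε, _root_.restrictList x ε L', ?_⟩
  simp [_root_.restrictList, Clause.drop]

lemma projList {V : Finset Var} (hKV : ∀ C ∈ K, ∀ l ∈ C, l.1 ∈ V) (hL : IsResRefutation K L) :
    IsResRefutation K (projList V L) := by
  obtain ⟨hL, L', rfl⟩ := isResRefutation_iff.1 hL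
  exact isResRefutation_iff.2 ⟨hL.projList hKV, _root_.projList V L', by simp [_root_.projList]⟩

end IsResRefutation

namespace ResStep

variable {K : CNF} {x : Var} {ε : Bool} {prev : List Clause} {D : Clause}

/-- Clauses of `K|_{x = ε}` with the literal `(x, !ε)` added are weakenings of clauses of `K`. -/
lemma insert_of_restrict (hprev : ∀ C ∈ prev, ∀ b : Bool, (x, b) ∉ C)
    (hD : ∀ b : Bool, (x, b) ∉ D) (hR : ResStep (K.restrict x ε) prev D) :
    ResStep K (K.toList ++ prev.map (insert (x, !ε))) (insert (x, !ε) D) := by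
  rcases hR with hK | ⟨E, hE, hED⟩ | ⟨C₁, h₁, C₂, h₂, y, hy₁, hy₂, rfl, hn₁, hn₂⟩
  · obtain ⟨C, hC, hCx, rfl⟩ := CNF.mem_restrict.1 hK
    refine Or.inr (Or.inl ⟨C, List.mem_append_left _ (Finset.mem_toList.2 hC), ?_⟩)
    rw [Clause.drop_eq_erase (ε := !ε) (by simpa using hCx)]
    exact Finset.insert_erase_subset _ _
  · exact Or.inr (Or.inl ⟨_, List.mem_append_right _ (List.mem_map_of_mem hE),
      Finset.insert_subset_insert _ hED⟩)
  · have hyx : y ≠ x := by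
      rintro rfl
      exact hprev C₁ h₁ true hy₁
    have hne (b : Bool) : (x, !ε) ≠ (y, b) := fun h => hyx (congrArg Prod.fst h).symm
    refine Or.inr (Or.inr ⟨_, List.mem_append_right _ (List.mem_map_of_mem h₁),
      _, List.mem_append_right _ (List.mem_map_of_mem h₂), y,
      Finset.mem_insert_of_mem hy₁, Finset.mem_insert_of_mem hy₂, ?_, ?_, ?_⟩)
    · rw [Finset.erase_insert_of_ne (hne true), Finset.erase_insert_of_ne (hne false),
        Finset.insert_union, Finset.union_insert, Finset.insert_idem]
    · exact fun h => (Finset.mem_insert.1 h).elim (fun h => hne true h.symm) hn₁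
    · exact fun h => (Finset.mem_insert.1 h).elim (fun h => hne false h.symm) hn₂

lemma of_mem_restrict (hu : {(x, ε)} ∈ prev) (hK : ∀ C ∈ K, C ∈ prev)
    (hD : D ∈ K.restrict x ε) : ResStep K prev D := by
  obtain ⟨C, hC, hCx, rfl⟩ := CNF.mem_restrict.1 hD
  have hdrop : Clause.drop x C = C.erase (x, !ε) :=
    Clause.drop_eq_erase (by simpa using hCx)
  by_cases hx : (x, !ε) ∈ C
  · refine of_resolve (b := !ε) (hK C hC) hu hx (by simp) ?_ ?_ ?_
    · simp [hdrop]
    · simp [hdrop]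
    · simp [Clause.drop]
  · rw [hdrop, Finset.erase_eq_of_notMem hx]
    exact Or.inl hC

end ResStep

lemma ResSeq.insert_of_restrict {K : CNF} {x : Var} {ε : Bool} {M : List Clause}
    (hK : K.Proper) (hM : ResSeq (K.restrict x ε) M) (hMx : ∀ C ∈ M, ∀ b : Bool, (x, b) ∉ C) :
    ResSeq K (K.toList ++ M.map (insert (x, !ε))) := by
  have hproper (D : Clause) (hD : D.Proper) (hDx : ∀ b : Bool, (x, b) ∉ D) :
      (insert (x, !ε) D).Proper := by
    rintro v ⟨h₁, h₂⟩
    rcases Finset.mem_insert.1 h₁ with h₁ | h₁ <;> rcases Finset.mem_insert.1 h₂ with h₂ | h₂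
    · exact Bool.noConfusion ((Prod.mk.inj h₁).2.trans (Prod.mk.inj h₂).2.symm)
    · exact hDx false ((Prod.mk.inj h₁).1 ▸ h₂)
    · exact hDx true ((Prod.mk.inj h₂).1 ▸ h₁)
    · exact hD v ⟨h₁, h₂⟩
  simpa using append_map_filter (insert (x, !ε)) (fun _ => true) (fun C => ∀ b, (x, b) ∉ C)
    (of_forall_mem_cnf hK fun C hC => Finset.mem_toList.1 hC)
    (fun D hD hDx _ => hproper D hD hDx)
    (fun _ _ hprev _ hDx _ hR => by
      simpa using hR.insert_of_restrict (fun C hC => (hprev C hC).2) hDx)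
    hM hMx

/-- Projecting onto the variables of `K|_{x = ε}` first removes the literals on `x` that
weakenings in `M` may have introduced. -/
noncomputable def liftList (K : CNF) (x : Var) (ε : Bool) (M : List Clause) : List Clause :=
  K.toList ++ (projList (K.restrict x ε).vars M).map (insert (x, !ε))

lemma IsResRefutation.liftList {K : CNF} {x : Var} {ε : Bool} {M : List Clause}
    (hK : K.Proper) (hM : IsResRefutation (K.restrict x ε) M) :
    ResSeq K (liftList K x ε M) ∧ {(x, !ε)} ∈ liftList K x ε M := by
  obtain ⟨hM, M', rfl⟩ := isResRefutation_iff.1 hM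
  unfold _root_.liftList
  refine ⟨(hM.projList fun C hC l hl => CNF.mem_vars_of_mem hC hl).insert_of_restrict hK
    fun C hC b hb => CNF.notMem_vars_restrict (x := x) (mem_of_mem_projList hC hb),
    List.mem_append_right _ (List.mem_map.2 ⟨∅, List.mem_map.2 ⟨∅, by simp, by simp⟩, by simp⟩)⟩

lemma card_le_of_mem_liftList {K : CNF} {x : Var} {ε : Bool} {M : List Clause} {W : ℕ}
    (hK : ∀ C ∈ K, C.card ≤ W) (hM : listWidth M + 1 ≤ W) :
    ∀ C ∈ liftList K x ε M, C.card ≤ W := by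
  simp only [liftList, projList, List.mem_append, Finset.mem_toList, List.map_map,
    List.mem_map, Function.comp_apply]
  rintro _ (hC | ⟨C, hC, rfl⟩)
  · exact hK _ hC
  · calc _ ≤ (C.filter _).card + 1 := Finset.card_insert_le _ _
      _ ≤ C.card + 1 := by gcongr; exact Finset.filter_subset _ _
      _ ≤ W := by have := card_le_listWidth hC; omega

theorem exists_refutation_of_restrict {K : CNF} (hK : K.Proper) {x : Var} {ε : Bool}
    {M₁ M₂ : List Clause} {W : ℕ} (h₁ : IsResRefutation (K.restrict x ε) M₁)
    (h₂ : IsResRefutation (K.restrict x !ε) M₂) (hKW : ∀ C ∈ K, C.card ≤ W)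
    (hW₁ : listWidth M₁ + 1 ≤ W) (hW₂ : listWidth M₂ ≤ W) :
    ∃ M, IsResRefutation K M ∧ listWidth M ≤ W := by
  obtain ⟨hA, hu⟩ := h₁.liftList hK
  set B := liftList K x ε M₁ ++ (K.restrict x !ε).toList
  have hB : ResSeq K B := hA.append_of_forall_resStep fun D hD =>
    ⟨hK.restrict x _ D (Finset.mem_toList.1 hD), .of_mem_restrict hu
      (fun C hC => List.mem_append_left _ (Finset.mem_toList.2 hC)) (Finset.mem_toList.1 hD)⟩
  obtain ⟨hM₂, M₂', rfl⟩ := isResRefutation_iff.1 h₂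
  refine ⟨B ++ (M₂' ++ [∅]), isResRefutation_iff.2 ⟨hB.append_of_subset_cnf
    (fun C hC => ⟨C, List.mem_append_right _ (Finset.mem_toList.2 hC), subset_rfl⟩) hM₂,
    B ++ M₂', by simp⟩, listWidth_le_iff.2 ?_⟩
  intro C hC
  rcases List.mem_append.1 hC with hC | hC
  · rcases List.mem_append.1 hC with hC | hC
    · exact card_le_of_mem_liftList hKW hW₁ C hC
    · exact CNF.card_le_of_mem_restrict hKW C (Finset.mem_toList.1 hC)
  · exact (card_le_listWidth hC).trans hW₂

lemma isResRefutation_singleton {K : CNF} (h : (∅ : Clause) ∈ K) : IsResRefutation K [∅] :=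
  isResRefutation_iff.2 ⟨by simpa using ResSeq.nil.snoc [] ∅ Clause.proper_empty (Or.inl h),
    [], rfl⟩

theorem exists_refutation {K : CNF} (hK : K.Proper) (hU : K.Unsat) :
    ∃ L, IsResRefutation K L := by
  induction hm : K.vars.card using Nat.strong_induction_on generalizing K with
  | _ m ih =>
    obtain h0 | ⟨x, hx⟩ := K.vars.eq_empty_or_nonempty
    · exact ⟨[∅], isResRefutation_singleton (CNF.empty_mem_of_vars_eq_empty hU h0)⟩
    have hlt (ε : Bool) : (K.restrict x ε).vars.card < m :=
      hm ▸ (Finset.card_le_card CNF.vars_restrict_subset).trans_lt (Finset.card_erase_lt_of_mem hx)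
    obtain ⟨M₁, hM₁⟩ := ih _ (hlt true) (hK.restrict x true) (hU.restrict x true) rfl
    obtain ⟨M₂, hM₂⟩ := ih _ (hlt false) (hK.restrict x false) (hU.restrict x false) rfl
    obtain ⟨M, hM, -⟩ := exists_refutation_of_restrict hK hM₁ hM₂
      (fun C hC => (Finset.le_sup hC).trans (le_max_left (K.sup Finset.card) _))
      ((le_max_left _ _).trans (le_max_right _ _)) ((le_max_right _ _).trans (le_max_right _ _))
    exact ⟨M, hM⟩

def fatCount (d : ℕ) (L : List Clause) : ℕ := L.countP (fun C => d < C.card)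

def litFatCount (d : ℕ) (l : Lit) (L : List Clause) : ℕ :=
  L.countP (fun C => d < C.card ∧ l ∈ C)

section FatClauses

variable {d : ℕ} {L : List Clause}

lemma listWidth_le_of_fatCount_eq_zero (h : fatCount d L = 0) : listWidth L ≤ d :=
  listWidth_le_iff.2 fun C hC => by simpa using List.countP_eq_zero.1 h C hC

lemma fatCount_map_le {f : Clause → Clause} (hf : ∀ C, (f C).card ≤ C.card) :
    fatCount d (L.map f) ≤ fatCount d L := by
  rw [fatCount, List.countP_map]
  exact List.countP_mono_left fun C _ h => by simpa using (by simpa using h : d < _).trans_le (hf C)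

lemma fatCount_projList_le (V : Finset Var) : fatCount d (projList V L) ≤ fatCount d L :=
  fatCount_map_le fun _ => Finset.card_le_card (Finset.filter_subset _ _)

lemma fatCount_filter_notMem_add (l : Lit) :
    fatCount d (L.filter fun C => decide (l ∉ C)) + litFatCount d l L = fatCount d L := by
  induction L with
  | nil => simp [fatCount, litFatCount]
  | cons C L ih =>
      by_cases h₁ : d < C.card <;> by_cases h₂ : l ∈ C <;>
        simp_all [fatCount, litFatCount] <;> omega

/-- Setting `x := ε` satisfies, and so removes, the fat clauses containing `(x, ε)`. -/
lemma fatCount_restrictList_add_le (x : Var) (ε : Bool) :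
    fatCount d (restrictList x ε L) + litFatCount d (x, ε) L ≤ fatCount d L := by
  have := fatCount_map_le (d := d) (L := L.filter fun C => decide ((x, ε) ∉ C))
    (Finset.card_le_card <| Clause.drop_subset x ·)
  have := fatCount_filter_notMem_add (d := d) (L := L) (x, ε)
  unfold restrictList
  omega

lemma card_mul_fatCount_le_sum {Lits : Finset Lit} (hL : ∀ C ∈ L, C ⊆ Lits) :
    (d + 1) * fatCount d L ≤ ∑ l ∈ Lits, litFatCount d l L := by
  induction L with
  | nil => simp [fatCount]
  | cons C L ih =>
      have ih := ih fun C' hC' => hL C' (List.mem_cons_of_mem _ hC')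
      have hC : ∑ l ∈ Lits, (if l ∈ C then 1 else 0) = C.card := by
        rw [Finset.sum_boole, Finset.filter_mem_eq_inter,
          Finset.inter_eq_right.2 (hL C List.mem_cons_self), Nat.cast_id]
      simp only [fatCount, litFatCount, List.countP_cons, Finset.sum_add_distrib] at ih ⊢
      by_cases hfat : d < C.card
      · simp only [hfat, decide_true, true_and, decide_eq_true_eq, if_true, hC]
        nlinarith
      · simpa [hfat] using ih

lemma exists_card_mul_fatCount_le {Lits : Finset Lit} (hL : ∀ C ∈ L, C ⊆ Lits)
    (hF : 0 < fatCount d L) :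
    ∃ l ∈ Lits, (d + 1) * fatCount d L ≤ Lits.card * litFatCount d l L := by
  obtain ⟨C, hCL, hC⟩ := List.countP_pos_iff.1 hF
  obtain ⟨l₀, hl₀⟩ := Finset.card_pos.1 ((Nat.zero_le d).trans_lt (by simpa using hC))
  obtain ⟨l, hl, hmax⟩ := Finset.exists_max_image Lits (litFatCount d · L) ⟨l₀, hL C hCL hl₀⟩
  refine ⟨l, hl, (card_mul_fatCount_le_sum hL).trans ?_⟩
  simpa using Finset.sum_le_card_nsmul Lits _ _ hmax

end FatClauses

lemma sub_pow_mul_lt_pow_of_mul_le {N a f f₁ c F t : ℕ} (hc : a * f ≤ N * c) (hf₁ : f₁ + c ≤ f)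
    (hF : f ≤ F) (h : (N - a) ^ (t + 1) * F < N ^ (t + 1)) : (N - a) ^ t * f₁ < N ^ t := by
  have hf : N * f₁ ≤ (N - a) * F := by
    have h₁ : N * f₁ + N * c ≤ N * f := by rw [← mul_add]; exact Nat.mul_le_mul_left N hf₁
    have h₂ : (N - a) * f = N * f - a * f := Nat.sub_mul N a f
    have h₃ : (N - a) * f ≤ (N - a) * F := Nat.mul_le_mul_left _ hF
    omega
  refine Nat.lt_of_mul_lt_mul_left (a := N) ?_
  calc N * ((N - a) ^ t * f₁) = (N - a) ^ t * (N * f₁) := by ring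
    _ ≤ (N - a) ^ t * ((N - a) * F) := Nat.mul_le_mul_left _ hf
    _ = (N - a) ^ (t + 1) * F := by ring
    _ < N ^ (t + 1) := h
    _ = N * N ^ t := by ring

theorem exists_refutation_width_le_of_fatCount {n r d : ℕ} (t : ℕ) {K : CNF} {L : List Clause}
    {F : ℕ} (hK : K.Proper) (hn : K.vars.card ≤ n) (hr : ∀ C ∈ K, C.card ≤ r)
    (hL : IsResRefutation K L) (hLF : fatCount d L ≤ F)
    (hF : (2 * n - (d + 1)) ^ t * F < (2 * n) ^ t) :
    ∃ M, IsResRefutation K M ∧ listWidth M ≤ r + d + t := by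
  induction t generalizing K L F with
  | zero =>
    exact ⟨L, hL, (listWidth_le_of_fatCount_eq_zero (d := d) (by simp at hF; omega)).trans
      (by omega)⟩
  | succ t iht =>
    induction hm : K.vars.card using Nat.strong_induction_on generalizing K L F with
    | _ m ihm =>
    set L' := projList K.vars L
    have hL' : IsResRefutation K L' := hL.projList fun C hC l hl => CNF.mem_vars_of_mem hC hl
    have hL'F : fatCount d L' ≤ F := (fatCount_projList_le _).trans hLF
    obtain hF0 | hFpos := Nat.eq_zero_or_pos (fatCount d L')
    · exact ⟨L', hL', (listWidth_le_of_fatCount_eq_zero hF0).trans (by omega)⟩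
    obtain ⟨⟨x, ε⟩, hxε, hheavy⟩ := exists_card_mul_fatCount_le (Lits := K.vars ×ˢ Finset.univ)
      (fun C hC l hl => Finset.mem_product.2 ⟨mem_of_mem_projList hC hl, Finset.mem_univ _⟩) hFpos
    have hLits : (K.vars ×ˢ (Finset.univ : Finset Bool)).card ≤ 2 * n := by
      rw [Finset.card_product, Finset.card_univ, Fintype.card_bool]
      omega
    have hvars (b : Bool) : (K.restrict x b).vars.card < m :=
      hm ▸ (Finset.card_le_card CNF.vars_restrict_subset).trans_lt
        (Finset.card_erase_lt_of_mem (Finset.mem_product.1 hxε).1)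
    obtain ⟨M₁, hM₁, hW₁⟩ := iht (hK.restrict x ε) (by have := hvars ε; omega)
      (CNF.card_le_of_mem_restrict hr) (hL'.restrictList x ε) le_rfl
      (sub_pow_mul_lt_pow_of_mul_le (hheavy.trans (Nat.mul_le_mul_right _ hLits))
        (fatCount_restrictList_add_le x ε) hL'F hF)
    obtain ⟨M₂, hM₂, hW₂⟩ := ihm _ (hvars !ε) (hK.restrict x !ε) (by have := hvars !ε; omega)
      (CNF.card_le_of_mem_restrict hr) (hL'.restrictList x !ε)
      ((Nat.le_add_right _ _).trans ((fatCount_restrictList_add_le x !ε).trans hL'F)) hF rfl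
    exact exists_refutation_of_restrict hK hM₁ hM₂ (fun C hC => (hr C hC).trans (by omega))
      (by omega) hW₂

lemma sub_pow_mul_lt_pow_of_mul_log_lt {n d S : ℕ} (hn : 0 < n) (hS : 0 < S)
    (h : 2 * n * Real.log S < d * (d + 1)) : (2 * n - (d + 1)) ^ d * S < (2 * n) ^ d := by
  have hd : 0 < d := by
    rcases Nat.eq_zero_or_pos d with rfl | hd
    · have : 0 ≤ Real.log S := Real.log_nonneg (by exact_mod_cast hS)
      simp at h
      nlinarith
    · exact hd
  rcases le_or_gt (2 * n) (d + 1) with hnd | hnd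
  · rw [Nat.sub_eq_zero_of_le hnd, zero_pow hd.ne', zero_mul]
    positivity
  set N : ℝ := 2 * n
  have hN : 0 < N := by positivity
  have hbase : N - (d + 1) ≤ N * Real.exp (-((d + 1) / N)) := by
    calc N - (d + 1) = N * (-((d + 1) / N) + 1) := by field_simp; ring
      _ ≤ N * Real.exp (-((d + 1) / N)) := by gcongr; exact Real.add_one_le_exp _
  have hexp : Real.exp (d * -((d + 1) / N)) * S < 1 := by
    rw [← Real.exp_log (by exact_mod_cast hS : (0 : ℝ) < S), ← Real.exp_add, Real.exp_lt_one_iff]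
    have : Real.log S < d * (d + 1) / N := by rw [lt_div_iff₀ hN]; linarith
    rw [mul_neg, mul_div_assoc']
    linarith
  have hcast : ((2 * n - (d + 1) : ℕ) : ℝ) = N - (d + 1) := by
    rw [Nat.cast_sub hnd.le]; push_cast; ring
  rw [← Nat.cast_lt (α := ℝ)]
  push_cast [hcast]
  calc (N - (d + 1)) ^ d * S ≤ (N * Real.exp (-((d + 1) / N))) ^ d * S := by
        gcongr
        have : ((d + 1 : ℕ) : ℝ) < (2 * n : ℕ) := by exact_mod_cast hnd
        push_cast at this
        linarith
    _ = N ^ d * (Real.exp (d * -((d + 1) / N)) * S) := by rw [Real.exp_nat_mul]; ring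
    _ < N ^ d * 1 := by gcongr
    _ = N ^ d := mul_one _

lemma lt_ceil_sqrt_mul_succ {y : ℝ} (hy : 0 < y) : y < ⌈√y⌉₊ * (⌈√y⌉₊ + 1) := by
  have hd : √y ≤ ⌈√y⌉₊ := Nat.le_ceil _
  have hpos : 0 < (⌈√y⌉₊ : ℝ) := (Real.sqrt_pos.2 hy).trans_le hd
  nlinarith [Real.sq_sqrt hy.le, Real.sqrt_nonneg y]

lemma sq_le_of_le_two_mul_ceil_sqrt {y a : ℝ} (hy : 1 ≤ y) (ha : 0 ≤ a) (had : a ≤ 2 * ⌈√y⌉₊) :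
    a ^ 2 ≤ 16 * y := by
  have h1 : 1 ≤ √y := Real.one_le_sqrt.2 hy
  have hd : (⌈√y⌉₊ : ℝ) < √y + 1 := Nat.ceil_lt_add_one (Real.sqrt_nonneg y)
  nlinarith [Real.sq_sqrt (zero_le_one.trans hy)]

lemma exp_sq_div_le_of_le_two_mul_ceil_sqrt {n S : ℕ} {a : ℝ} (hn : 0 < n) (hS : 2 ≤ S)
    (ha : 0 ≤ a) (had : a ≤ 2 * ⌈√(2 * n * Real.log S)⌉₊) :
    Real.exp (1 / 32 * a ^ 2 / n) ≤ S := by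
  have hy : 1 ≤ 2 * n * Real.log S := by
    have : Real.log 2 ≤ Real.log S := Real.log_le_log two_pos (by exact_mod_cast hS)
    have : (1 : ℝ) ≤ n := by exact_mod_cast hn
    nlinarith [Real.log_two_gt_d9]
  have := sq_le_of_le_two_mul_ceil_sqrt hy ha had
  calc Real.exp (1 / 32 * a ^ 2 / n) ≤ Real.exp (Real.log S) := by
        gcongr
        rw [div_le_iff₀ (by positivity)]
        linarith
    _ = S := Real.exp_log (by positivity)

lemma resWidth_le {K : CNF} {M : List Clause} (hM : IsResRefutation K M) :
    resWidth K ≤ listWidth M :=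
  Nat.sInf_le ⟨M, hM, rfl⟩

lemma resWidth_eq_zero_of_empty_mem {K : CNF} (h : (∅ : Clause) ∈ K) : resWidth K = 0 :=
  Nat.le_zero.1 ((resWidth_le (isResRefutation_singleton h)).trans (by simp [listWidth]))

lemma exists_isResRefutation_length_eq_resSize {K : CNF} (hK : K.Proper) (hU : K.Unsat) :
    ∃ L, IsResRefutation K L ∧ L.length = resSize K := by
  obtain ⟨L, hL⟩ := exists_refutation hK hU
  exact Nat.sInf_mem (s := {s | ∃ L, IsResRefutation K L ∧ L.length = s}) ⟨L.length, L, hL, rfl⟩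

lemma two_le_length_of_empty_notMem {K : CNF} {L : List Clause} (hL : IsResRefutation K L)
    (hK : (∅ : Clause) ∉ K) : 2 ≤ L.length := by
  obtain ⟨hL, _ | ⟨C, L'⟩, rfl⟩ := isResRefutation_iff.1 hL
  · obtain ⟨-, -, hR⟩ := hL.of_append_singleton
    rcases hR with h | ⟨E, hE, -⟩ | ⟨C₁, h₁, -⟩
    · exact absurd h hK
    · simp at hE
    · simp at h₁
  · simp

/-- the Ben-Sasson–Wigderson size-width tradeoff. -/
theorem size_width_tradeoff :
    ∃ c : ℝ, 0 < c ∧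
      ∀ (n r : ℕ) (K : CNF), CNF.Proper K → (CNF.vars K).card ≤ n → CNF.Unsat K →
        (∀ C ∈ K, C.card ≤ r) →
        Real.exp (c * ((resWidth K - r : ℕ) : ℝ) ^ 2 / n) ≤ (resSize K : ℝ) := by
  refine ⟨1 / 32, by norm_num, fun n r K hK hn hU hr => ?_⟩
  obtain ⟨L, hL, hLS⟩ := exists_isResRefutation_length_eq_resSize hK hU
  by_cases h₀ : (∅ : Clause) ∈ K
  · simpa [resWidth_eq_zero_of_empty_mem h₀, ← hLS, Nat.one_le_iff_ne_zero] using hL.1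
  set S := resSize K
  have hS : 2 ≤ S := hLS ▸ two_le_length_of_empty_notMem hL h₀
  have hn0 : 0 < n := (Finset.card_pos.2 (Finset.nonempty_iff_ne_empty.2
    fun h => h₀ (CNF.empty_mem_of_vars_eq_empty hU h))).trans_le hn
  have hy : 0 < 2 * n * Real.log S := by
    have := Real.log_pos (by exact_mod_cast hS : (1 : ℝ) < S)
    positivity
  set d := ⌈√(2 * n * Real.log S)⌉₊
  obtain ⟨M, hM, hMw⟩ := exists_refutation_width_le_of_fatCount d hK hn hr hL
    (hLS ▸ List.countP_le_length)
    (sub_pow_mul_lt_pow_of_mul_log_lt hn0 (by omega) (lt_ceil_sqrt_mul_succ hy))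
  have hwd : ((resWidth K - r : ℕ) : ℝ) ≤ 2 * d := by
    have := (resWidth_le hM).trans hMw
    exact_mod_cast (by omega : resWidth K - r ≤ 2 * d)
  exact exp_sq_div_le_of_le_two_mul_ceil_sqrt hn0 hS (Nat.cast_nonneg _) hwd
end

section
/- Let 0 < ε < 1 be a constant and set c = 3⌈log_{7/8}(ε/2)⌉. There exists a polynomial p such that for all sufficiently large n the following holds: if T is a 3CNF formula over the variables X = {x_1,…,x_n} consisting of c/3 pairwise variable-disjoint clauses (no variable occurs in two clauses of T), then there exists a CNF formula A over X together with finitely many extension variables such that A discards at most ε·2^n assignments to X and T ∪ A has a resolution refutation of size at most p(n). -/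
open scoped Classical

/-!
Give each clause `C` of `T` a fresh variable `z_C` and let `A` say `z_C ↔ C` for every `C`, and
`⋁ ¬z_C`. An assignment to `X` extends to a model of `A` iff it falsifies `T`, so `A` discards only
models of `T`; as the clauses of `T` are on disjoint variables, `T` has exactly `(7/8)^|T| · 2ⁿ ≤
ε/2 · 2ⁿ` models. Refuting `T ∪ A` takes linearly many steps: each unit `z_C` follows from `C` and
the implications `l → z_C`, and these units resolve `⋁ ¬z_C` down to the empty clause.
-/

open Finset

def Lit.neg (l : Lit) : Lit := (l.1, !l.2)

theorem Clause.Proper.mono_s7 {C D : Clause} (hD : D.Proper) (h : C ⊆ D) : C.Proper :=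
  fun v hv => hD v ⟨h hv.1, h hv.2⟩

theorem Clause.Proper.neg_notMem {C : Clause} (hC : C.Proper) {l : Lit} (hl : l ∈ C) :
    l.neg ∉ C := by
  obtain ⟨v, _ | _⟩ := l
  · exact fun h => hC v ⟨h, hl⟩
  · exact fun h => hC v ⟨hl, h⟩

def IsResSeq (K : CNF) (L : List Clause) : Prop :=
  ∀ i : Fin L.length, Clause.Proper (L.get i) ∧ ResStep K (L.take i.val) (L.get i)

namespace IsResSeq

variable {K : CNF} {L : List Clause}

theorem of_forall_mem (h : ∀ D ∈ L, D ∈ K ∧ D.Proper) : IsResSeq K L := fun i =>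
  have hi := h _ (List.get_mem L i)
  ⟨hi.2, Or.inl hi.1⟩

theorem snoc (hL : IsResSeq K L) {D : Clause} (hD : D.Proper) (hstep : ResStep K L D) :
    IsResSeq K (L ++ [D]) := by
  intro ⟨i, hi⟩
  rw [List.length_append, List.length_singleton] at hi
  rcases Nat.lt_or_ge i L.length with hi' | hi'
  · simpa [List.getElem_append_left hi', List.take_append_of_le_length hi'.le]
      using hL ⟨i, hi'⟩
  · obtain rfl : i = L.length := by omega
    simpa using ⟨hD, hstep⟩

theorem snoc_weaken (hL : IsResSeq K L) {C D : Clause} (hC : C ∈ L) (hCD : C ⊆ D)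
    (hD : D.Proper) : IsResSeq K (L ++ [D]) :=
  hL.snoc hD (Or.inr (Or.inl ⟨C, hC, hCD⟩))

theorem snoc_erase (hL : IsResSeq K L) {C S : Clause} {l : Lit} (hC : C ∈ L) (hCp : C.Proper)
    (hl : l ∈ C) (hS : S ∈ L) (hSl : l.neg ∈ S) (hSC : S.erase l.neg ⊆ C.erase l) :
    IsResSeq K (L ++ [C.erase l]) := by
  have hres : C.erase l = C.erase l ∪ S.erase l.neg := (union_eq_left.2 hSC).symm
  have hfree : ∀ b, (l.1, b) ∉ C.erase l := by
    intro b hb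
    obtain ⟨v, c⟩ := l
    by_cases hbc : b = c
    · subst hbc
      exact notMem_erase _ C hb
    · obtain rfl : b = !c := by cases b <;> cases c <;> first | rfl | exact absurd rfl hbc
      exact hCp.neg_notMem hl (mem_of_mem_erase hb)
  refine hL.snoc (hCp.mono_s7 (erase_subset l C)) (Or.inr (Or.inr ?_))
  obtain ⟨v, _ | _⟩ := l
  · exact ⟨S, hS, C, hC, v, hSl, hl, hres.trans (union_comm _ _), hfree true, hfree false⟩
  · exact ⟨C, hC, S, hS, v, hl, hSl, hres, hfree true, hfree false⟩

theorem exists_sdiff (hL : IsResSeq K L) {D : Clause} (hD : D ∈ L) (hDp : D.Proper)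
    {s : Finset Lit} (hs : s ⊆ D)
    (hside : ∀ l ∈ s, ∃ S ∈ L, l.neg ∈ S ∧ S.erase l.neg ⊆ D \ s) :
    ∃ E, IsResSeq K (L ++ E) ∧ D \ s ∈ L ++ E ∧ E.length = s.card := by
  induction s using Finset.induction_on with
  | empty => exact ⟨[], by simpa using hL, by simpa using hD, rfl⟩
  | @insert l s hls ih =>
    have hside' : ∀ l' ∈ s, ∃ S ∈ L, l'.neg ∈ S ∧ S.erase l'.neg ⊆ D \ s := by
      intro l' hl'
      obtain ⟨S, hS, hSl, hSD⟩ := hside l' (mem_insert_of_mem hl')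
      exact ⟨S, hS, hSl, hSD.trans (sdiff_subset_sdiff subset_rfl (subset_insert l s))⟩
    obtain ⟨E, hE, hDs, hlen⟩ := ih ((subset_insert l s).trans hs) hside'
    obtain ⟨S, hS, hSl, hSD⟩ := hside l (mem_insert_self l s)
    have hstrip : (D \ s).erase l = D \ insert l s := by
      rw [sdiff_insert]
    refine ⟨E ++ [(D \ s).erase l], ?_, by simp [hstrip], by simp [hlen, card_insert_of_notMem hls]⟩
    rw [← List.append_assoc]
    exact hE.snoc_erase hDs (hDp.mono_s7 sdiff_subset)
      (mem_sdiff.2 ⟨hs (mem_insert_self l s), hls⟩) (List.mem_append_left E hS) hSl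
      (hSD.trans_eq hstrip.symm)

theorem exists_forall_mem {ι : Type*} (hL : IsResSeq K L) (s : Finset ι) (D : ι → Clause)
    (c : ℕ) (hD : ∀ i ∈ s, ∀ L', IsResSeq K (L ++ L') →
      ∃ E, IsResSeq K (L ++ L' ++ E) ∧ D i ∈ L ++ L' ++ E ∧ E.length ≤ c) :
    ∃ E, IsResSeq K (L ++ E) ∧ (∀ i ∈ s, D i ∈ L ++ E) ∧ E.length ≤ c * s.card := by
  induction s using Finset.induction_on with
  | empty => exact ⟨[], by simpa using hL, by simp, by simp⟩
  | @insert i s his ih =>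
    obtain ⟨E, hE, hmem, hlen⟩ := ih fun j hj => hD j (mem_insert_of_mem hj)
    obtain ⟨E', hE', hi, hlen'⟩ := hD i (mem_insert_self i s) E hE
    refine ⟨E ++ E', by rwa [← List.append_assoc], ?_, ?_⟩
    · intro j hj
      rw [← List.append_assoc]
      rcases mem_insert.1 hj with rfl | hj
      · exact hi
      · exact List.mem_append_left E' (hmem j hj)
    · rw [List.length_append, card_insert_of_notMem his, mul_add_one]
      omega

theorem isResRefutation_snoc_empty (hL : IsResSeq K L) (h : ∅ ∈ L) :
    IsResRefutation K (L ++ [∅]) :=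
  ⟨by simp, List.getLast?_concat, hL.snoc_weaken h subset_rfl (fun _ h => notMem_empty _ h.1)⟩

end IsResSeq

theorem Clause.mem_vars_of_mem {C : Clause} {l : Lit} (hl : l ∈ C) : l.1 ∈ C.vars :=
  mem_image_of_mem Prod.fst hl

theorem Clause.vars_subset_of_mem {T : CNF} {C : Clause} (hC : C ∈ T) : C.vars ⊆ T.vars :=
  le_sup (f := Clause.vars) hC

theorem Clause.proper_of_card_vars {C : Clause} (h : C.vars.card = C.card) : C.Proper := by
  have hinj : Set.InjOn Prod.fst (C : Set Lit) := card_image_iff.1 h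
  intro v ⟨ht, hf⟩
  simpa using hinj ht hf rfl

theorem Clause.Proper.insert {C : Clause} (hC : C.Proper) {x : Lit} (hx : x.1 ∉ C.vars) :
    (insert x C).Proper := by
  intro v ⟨ht, hf⟩
  rcases mem_insert.1 ht with rfl | htC <;> rcases mem_insert.1 hf with h | hfC
  · simp at h
  · exact hx (Clause.mem_vars_of_mem (l := (v, false)) hfC)
  · subst h
    exact hx (Clause.mem_vars_of_mem (l := (v, true)) htC)
  · exact hC v ⟨htC, hfC⟩

theorem Clause.proper_singleton (x : Lit) : Clause.Proper {x} := by
  intro v ⟨ht, hf⟩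
  simp only [mem_singleton] at ht hf
  simpa using ht.trans hf.symm

theorem Lit.eval_neg (a : Assignment) (l : Lit) : Lit.eval a l.neg = !Lit.eval a l := by
  obtain ⟨v, _ | _⟩ := l <;> simp [Lit.eval, Lit.neg]

theorem Clause.sat_congr {C : Clause} {a a' : Assignment} (h : ∀ v ∈ C.vars, a v = a' v) :
    Clause.Sat a C ↔ Clause.Sat a' C := by
  refine exists_congr fun l => and_congr_right fun hl => ?_
  rw [Lit.eval, Lit.eval, h l.1 (Clause.mem_vars_of_mem hl)]

def freshVar (n : ℕ) (C : Clause) : Var := n + Encodable.encode C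

theorem freshVar_notMem_vars {n : ℕ} (C : Clause) {D : Clause} (hD : D.vars ⊆ range n) :
    freshVar n C ∉ D.vars :=
  fun h => by simpa [freshVar] using hD h

/-- Forces `z ↔ C`. -/
def defClauses (z : Var) (C : Clause) : CNF :=
  insert (insert (z, false) C) (C.image fun l => {(z, true), l.neg})

/-- Tseitin encoding of `¬T`. -/
def negTseitin (n : ℕ) (T : CNF) : CNF :=
  insert (T.image fun C => (freshVar n C, false)) (T.biUnion fun C => defClauses (freshVar n C) C)

theorem mem_defClauses_of_mem {z : Var} {C : Clause} {l : Lit} (hl : l ∈ C) :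
    {(z, true), l.neg} ∈ defClauses z C := by
  unfold defClauses
  exact mem_insert_of_mem (mem_image_of_mem _ hl)

theorem defClauses_subset_negTseitin {n : ℕ} {T : CNF} {C : Clause} (hC : C ∈ T) :
    defClauses (freshVar n C) C ⊆ negTseitin n T := by
  unfold negTseitin
  exact (subset_biUnion_of_mem (fun C => defClauses (freshVar n C) C) hC).trans (subset_insert _ _)

theorem image_freshVar_mem_negTseitin (n : ℕ) (T : CNF) :
    T.image (fun C => (freshVar n C, false)) ∈ negTseitin n T := by
  unfold negTseitin
  exact mem_insert_self _ _

theorem sat_defClauses {b : Assignment} {z : Var} {C : Clause}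
    (hz : b z = decide (Clause.Sat b C)) : CNF.Sat b (defClauses z C) := by
  intro D hD
  rcases mem_insert.1 hD with rfl | hD
  · by_cases hC : Clause.Sat b C
    · obtain ⟨l, hl, hlb⟩ := hC
      exact ⟨l, mem_insert_of_mem hl, hlb⟩
    · exact ⟨(z, false), mem_insert_self _ _, by simp [Lit.eval, hz, hC]⟩
  · obtain ⟨l, hl, rfl⟩ := mem_image.1 hD
    by_cases hC : Clause.Sat b C
    · exact ⟨(z, true), mem_insert_self _ _, by simp [Lit.eval, hz, hC]⟩
    · have hlb : Lit.eval b l = false := by simpa using fun h => hC ⟨l, hl, h⟩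
      exact ⟨l.neg, by simp, by rw [Lit.eval_neg, hlb]; rfl⟩

theorem discardedSet_negTseitin_subset {n : ℕ} {T : CNF} (hT : T.vars ⊆ range n) :
    discardedSet n (negTseitin n T) ⊆ satSet n T := by
  intro a ha
  by_contra hsat
  obtain ⟨C₀, hC₀, hC₀a⟩ : ∃ C₀ ∈ T, ¬Clause.Sat (extendAssign a) C₀ := by
    simpa [satSet, CNF.Sat] using hsat
  set b : Assignment := fun v => if v < n then extendAssign a v else
    decide (∃ C, freshVar n C = v ∧ Clause.Sat (extendAssign a) C)
  have hb_lt : ∀ v < n, b v = extendAssign a v := fun v hv => if_pos hv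
  have hb_sat : ∀ C ∈ T, Clause.Sat b C ↔ Clause.Sat (extendAssign a) C := fun C hC =>
    Clause.sat_congr fun v hv => hb_lt v (mem_range.1 (hT (Clause.vars_subset_of_mem hC hv)))
  have hb_fresh : ∀ C, b (freshVar n C) = decide (Clause.Sat (extendAssign a) C) := by
    intro C
    simp [b, freshVar]
  refine ha ⟨b, fun i => by simp [hb_lt i i.2, extendAssign], fun D hD => ?_⟩
  rcases mem_insert.1 hD with rfl | hD
  · exact ⟨(freshVar n C₀, false), mem_image_of_mem _ hC₀, by simp [Lit.eval, hb_fresh, hC₀a]⟩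
  · obtain ⟨C, hC, hD⟩ := mem_biUnion.1 hD
    exact sat_defClauses (by rw [hb_fresh, hb_sat C hC]) D hD

/-- The clause `{z, ¬l}` is the implication `l → z`: weaken `C` to `z ∨ C`, then resolve its
literals away against these implications. -/
theorem IsResSeq.exists_unit_of_implications {K : CNF} {L : List Clause} (hL : IsResSeq K L)
    {C : Clause} {z : Var} (hC : C ∈ L) (hCp : C.Proper) (hz : z ∉ C.vars)
    (himp : ∀ l ∈ C, {(z, true), l.neg} ∈ L) :
    ∃ E, IsResSeq K (L ++ E) ∧ {(z, true)} ∈ L ++ E ∧ E.length = C.card + 1 := by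
  set D : Clause := insert (z, true) C
  have hzC : (z, true) ∉ C := fun h => hz (Clause.mem_vars_of_mem h)
  have hL₁ : IsResSeq K (L ++ [D]) := hL.snoc_weaken hC (subset_insert _ _) (hCp.insert hz)
  have hDC : D \ C = {(z, true)} := by
    rw [insert_sdiff_of_notMem _ hzC, sdiff_self, bot_eq_empty, insert_empty]
  obtain ⟨E, hE, hmem, hlen⟩ := hL₁.exists_sdiff (D := D) (s := C) (by simp) (hCp.insert hz)
    (subset_insert _ _) fun l hl =>
      ⟨{(z, true), l.neg}, List.mem_append_left _ (himp l hl), by simp, by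
        rw [hDC]
        intro x hx
        simp only [mem_erase, mem_insert, mem_singleton] at hx ⊢
        tauto⟩
  refine ⟨D :: E, by simpa using hE, by simpa [hDC] using hmem, by simp [hlen]⟩

theorem negTseitin_proper {n : ℕ} {T : CNF} (hTp : T.Proper) (hT : T.vars ⊆ range n) :
    (negTseitin n T).Proper := by
  intro D hD
  rcases mem_insert.1 hD with rfl | hD
  · intro v ⟨ht, _⟩
    simp at ht
  · obtain ⟨C, hC, hD⟩ := mem_biUnion.1 hD
    have hCv : C.vars ⊆ range n := (Clause.vars_subset_of_mem hC).trans hT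
    rcases mem_insert.1 hD with rfl | hD
    · exact (hTp C hC).insert (freshVar_notMem_vars C hCv)
    · obtain ⟨l, hl, rfl⟩ := mem_image.1 hD
      refine (Clause.proper_singleton _).insert (freshVar_notMem_vars C ?_)
      simpa [Clause.vars, Lit.neg] using hCv (Clause.mem_vars_of_mem hl)

theorem card_negTseitin_le {n w : ℕ} {T : CNF} (hw : ∀ C ∈ T, C.card ≤ w) :
    (negTseitin n T).card ≤ (w + 1) * T.card + 1 := by
  have hdef : ∀ C ∈ T, (defClauses (freshVar n C) C).card ≤ w + 1 := fun C hC =>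
    (card_insert_le _ _).trans (Nat.add_le_add_right (card_image_le.trans (hw C hC)) 1)
  calc (negTseitin n T).card
      ≤ (T.biUnion fun C => defClauses (freshVar n C) C).card + 1 := card_insert_le _ _
    _ ≤ T.card * (w + 1) + 1 := Nat.add_le_add_right (card_biUnion_le_card_mul _ _ _ hdef) 1
    _ = (w + 1) * T.card + 1 := by ring

theorem exists_isResRefutation_negTseitin {n w : ℕ} {T : CNF} (hTp : T.Proper)
    (hT : T.vars ⊆ range n) (hw : ∀ C ∈ T, C.card ≤ w) :
    ∃ L, IsResRefutation (T ∪ negTseitin n T) L ∧ L.length ≤ (2 * w + 4) * T.card + 2 := by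
  set K := T ∪ negTseitin n T
  set B : Clause := T.image fun C => (freshVar n C, false)
  have hAx : IsResSeq K K.toList := IsResSeq.of_forall_mem fun D hD => by
    rw [mem_toList] at hD
    refine ⟨hD, ?_⟩
    rcases mem_union.1 hD with hD | hD
    exacts [hTp D hD, negTseitin_proper hTp hT D hD]
  have hmem : ∀ D ∈ K, ∀ L', D ∈ K.toList ++ L' := fun D hD L' =>
    List.mem_append_left _ (mem_toList.2 hD)
  obtain ⟨E₁, hE₁, hunits, hlen₁⟩ := hAx.exists_forall_mem T (fun C => {(freshVar n C, true)})
    (w + 1) fun C hC L' hL' => by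
      obtain ⟨E, hE, hz, hlen⟩ := hL'.exists_unit_of_implications
        (hmem C (mem_union_left _ hC) L') (hTp C hC)
        (freshVar_notMem_vars C ((Clause.vars_subset_of_mem hC).trans hT))
        fun l hl => hmem _ (mem_union_right _
          (defClauses_subset_negTseitin hC (mem_defClauses_of_mem hl))) L'
      exact ⟨E, hE, hz, hlen.trans_le (Nat.add_le_add_right (hw C hC) 1)⟩
  obtain ⟨E₂, hE₂, hempty, hlen₂⟩ := hE₁.exists_sdiff (D := B) (s := B)
    (hmem B (mem_union_right _ (image_freshVar_mem_negTseitin n T)) E₁)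
    (fun v ⟨ht, _⟩ => by simp [B] at ht) subset_rfl fun l hl => by
      obtain ⟨C, hC, rfl⟩ := mem_image.1 hl
      exact ⟨{(freshVar n C, true)}, hunits C hC, by simp [Lit.neg], by simp [Lit.neg]⟩
  rw [sdiff_self] at hempty
  refine ⟨_, hE₂.isResRefutation_snoc_empty hempty, ?_⟩
  have hK : K.toList.length ≤ T.card + ((w + 1) * T.card + 1) :=
    (length_toList K).trans_le
      ((card_union_le _ _).trans (Nat.add_le_add_left (card_negTseitin_le hw) _))
  have hB : B.card ≤ T.card := card_image_le
  have : (2 * w + 4) * T.card = 2 * ((w + 1) * T.card) + 2 * T.card := by ring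
  simp only [List.length_append, List.length_singleton]
  omega

def falsify (C : Clause) {n : ℕ} (a : Fin n → Bool) : Fin n → Bool := fun i =>
  if ((i : ℕ), true) ∈ C then false else if ((i : ℕ), false) ∈ C then true else a i

section falsify

variable {C : Clause} {n : ℕ}

theorem falsify_apply_of_notMem (a : Fin n → Bool) {i : Fin n} (h : (i : ℕ) ∉ C.vars) :
    falsify C a i = a i := by
  have ht : ((i : ℕ), true) ∉ C := fun hi => h (Clause.mem_vars_of_mem hi)
  have hf : ((i : ℕ), false) ∉ C := fun hi => h (Clause.mem_vars_of_mem hi)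
  simp [falsify, ht, hf]

theorem falsify_congr {a a' : Fin n → Bool} (h : ∀ i : Fin n, (i : ℕ) ∉ C.vars → a i = a' i) :
    falsify C a = falsify C a' := by
  funext i
  by_cases hi : (i : ℕ) ∈ C.vars
  · obtain ⟨⟨v, b⟩, hl, hv⟩ := mem_image.1 hi
    simp only at hv
    subst hv
    cases b <;> simp [falsify, hl]
  · rw [falsify_apply_of_notMem a hi, falsify_apply_of_notMem a' hi, h i hi]

theorem not_sat_falsify (hCp : C.Proper) (hCv : C.vars ⊆ range n) (a : Fin n → Bool) :
    ¬Clause.Sat (extendAssign (falsify C a)) C := by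
  rintro ⟨⟨v, b⟩, hl, hsat⟩
  have hv : v < n := mem_range.1 (hCv (Clause.mem_vars_of_mem hl))
  have hext : extendAssign (falsify C a) v = falsify C a ⟨v, hv⟩ := dif_pos hv
  cases b
  · have ht : (v, true) ∉ C := fun h => hCp v ⟨h, hl⟩
    have hval : falsify C a ⟨v, hv⟩ = true := by
      simp only [falsify]
      rw [if_neg ht, if_pos hl]
    simp only [Lit.eval, hext, hval] at hsat
    exact absurd hsat (by decide)
  · have hval : falsify C a ⟨v, hv⟩ = false := by
      simp only [falsify]
      rw [if_pos hl]
    simp only [Lit.eval, hext, hval] at hsat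
    exact absurd hsat (by decide)

theorem falsify_eq_self {a : Fin n → Bool}
    (h : ¬Clause.Sat (extendAssign a) C) : falsify C a = a := by
  have hfalse : ∀ l ∈ C, Lit.eval (extendAssign a) l = false := fun l hl => by
    simpa using fun h' => h ⟨l, hl, h'⟩
  funext i
  have hi : extendAssign a i = a i := by simp [extendAssign]
  by_cases ht : ((i : ℕ), true) ∈ C
  · have hai : a i = false := by simpa [Lit.eval, hi] using hfalse _ ht
    simp only [falsify, if_pos ht, hai]
  · by_cases hf : ((i : ℕ), false) ∈ C
    · have hai : a i = true := by simpa [Lit.eval, hi] using hfalse _ hf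
      simp only [falsify, if_neg ht, if_pos hf, hai]
    · simp only [falsify, if_neg ht, if_neg hf]

end falsify

theorem card_filter_agree_off (V : Finset ℕ) {n : ℕ} (hV : V ⊆ range n) (b : Fin n → Bool) :
    #{a : Fin n → Bool | ∀ i : Fin n, (i : ℕ) ∉ V → a i = b i} = 2 ^ V.card := by
  set s : Finset (Fin n) := univ.filter fun i => (i : ℕ) ∈ V
  have hs : s.card = V.card := by
    refine card_bij (fun i _ => (i : ℕ)) (fun i hi => by simpa [s] using hi)
      (fun i _ j _ h => Fin.ext h) fun v hv => ?_
    exact ⟨⟨v, mem_range.1 (hV hv)⟩, by simpa [s] using hv, rfl⟩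
  have e : {a : Fin n → Bool // ∀ i : Fin n, (i : ℕ) ∉ V → a i = b i} ≃ (s → Bool) :=
    { toFun := fun a i => a.1 i
      invFun := fun f => ⟨fun i => if h : i ∈ s then f ⟨i, h⟩ else b i,
        fun i hi => by simp [s, hi]⟩
      left_inv := fun a => Subtype.ext <| funext fun i => by
        by_cases h : i ∈ s
        · simp [h]
        · simp only [h, dif_neg, not_false_eq_true]
          exact (a.2 i (by simpa [s] using h)).symm
      right_inv := fun f => funext fun i => by simp }
  rw [← Fintype.card_subtype, Fintype.card_congr e, Fintype.card_fun, Fintype.card_coe, hs,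
    Fintype.card_bool]

/-- `falsify C` maps `S` onto its `C`-falsifying part, `2 ^ |vars C|` to one. -/
theorem two_pow_mul_card_filter_not_sat {n : ℕ} {C : Clause} (hCp : C.Proper)
    (hCv : C.vars ⊆ range n) (S : Finset (Fin n → Bool))
    (hS : ∀ a a', (∀ i : Fin n, (i : ℕ) ∉ C.vars → a i = a' i) → a ∈ S → a' ∈ S) :
    2 ^ C.vars.card * #{a ∈ S | ¬Clause.Sat (extendAssign a) C} = #S := by
  have hmaps : Set.MapsTo (falsify C) (S : Set (Fin n → Bool))
      (({a ∈ S | ¬Clause.Sat (extendAssign a) C} : Finset _) : Set (Fin n → Bool)) := by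
    intro a ha
    refine mem_filter.2 ⟨hS a _ (fun i hi => (falsify_apply_of_notMem a hi).symm) ha, ?_⟩
    exact not_sat_falsify hCp hCv a
  have hfiber : ∀ b ∈ {a ∈ S | ¬Clause.Sat (extendAssign a) C},
      #{a ∈ S | falsify C a = b} = 2 ^ C.vars.card := by
    intro b hb
    obtain ⟨hbS, hb⟩ := mem_filter.1 hb
    rw [← card_filter_agree_off C.vars hCv b]
    congr 1
    ext a
    simp only [mem_filter, mem_univ, true_and]
    constructor
    · rintro ⟨-, rfl⟩ i hi
      exact (falsify_apply_of_notMem a hi).symm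
    · intro hab
      refine ⟨hS b a (fun i hi => (hab i hi).symm) hbS, ?_⟩
      rw [falsify_congr hab, falsify_eq_self hb]
  rw [card_eq_sum_card_fiberwise hmaps, sum_congr rfl hfiber, sum_const, smul_eq_mul, mul_comm]

theorem two_pow_mul_card_filter_sat {n : ℕ} {C : Clause} (hCp : C.Proper)
    (hCv : C.vars ⊆ range n) (S : Finset (Fin n → Bool))
    (hS : ∀ a a', (∀ i : Fin n, (i : ℕ) ∉ C.vars → a i = a' i) → a ∈ S → a' ∈ S) :
    2 ^ C.vars.card * #{a ∈ S | Clause.Sat (extendAssign a) C} = (2 ^ C.vars.card - 1) * #S := by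
  have hunsat := two_pow_mul_card_filter_not_sat hCp hCv S hS
  have hsplit := card_filter_add_card_filter_not (s := S) fun a => Clause.Sat (extendAssign a) C
  obtain ⟨m, hm⟩ : ∃ m, 2 ^ C.vars.card = m + 1 :=
    ⟨_, (Nat.succ_pred_eq_of_pos (by positivity)).symm⟩
  rw [hm, ← hsplit] at hunsat
  rw [hm, Nat.add_sub_cancel, ← hsplit]
  linarith

theorem satSet_eq_coe_filter (n : ℕ) (T : CNF) :
    satSet n T = ↑({a | CNF.Sat (extendAssign a) T} : Finset (Fin n → Bool)) := by
  ext a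
  simp [satSet]

theorem CNF.sat_extendAssign_congr {n : ℕ} {T : CNF} {V : Finset ℕ} (hT : T.vars ⊆ range n)
    (hV : Disjoint V T.vars) {a a' : Fin n → Bool} (h : ∀ i : Fin n, (i : ℕ) ∉ V → a i = a' i) :
    CNF.Sat (extendAssign a) T ↔ CNF.Sat (extendAssign a') T := by
  refine forall₂_congr fun D hD => Clause.sat_congr fun v hv => ?_
  have hvT : v ∈ T.vars := Clause.vars_subset_of_mem hD hv
  have hvn : v < n := mem_range.1 (hT hvT)
  simpa [extendAssign, hvn] using h ⟨v, hvn⟩ (disjoint_right.1 hV hvT)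

theorem two_pow_pow_mul_ncard_satSet {n k : ℕ} {T : CNF} (hTp : T.Proper)
    (hT : T.vars ⊆ range n) (hk : ∀ C ∈ T, C.vars.card = k)
    (hdisj : (T : Set Clause).PairwiseDisjoint Clause.vars) :
    (2 ^ k) ^ T.card * (satSet n T).ncard = (2 ^ k - 1) ^ T.card * 2 ^ n := by
  induction T using Finset.induction_on with
  | empty => simp [satSet_eq_coe_filter, CNF.Sat]
  | @insert C T hCT ih =>
    have hCv : C.vars ⊆ range n := (Clause.vars_subset_of_mem (mem_insert_self C T)).trans hT
    have hsub : T ⊆ insert C T := subset_insert C T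
    have hdisjC : Disjoint C.vars (CNF.vars T) := Finset.disjoint_sup_right.2 fun D hD =>
      hdisj (mem_insert_self C T) (mem_insert_of_mem hD) (ne_of_mem_of_not_mem hD hCT).symm
    have hinv : ∀ a a' : Fin n → Bool, (∀ i : Fin n, (i : ℕ) ∉ C.vars → a i = a' i) →
        a ∈ ({a | CNF.Sat (extendAssign a) T} : Finset _) →
        a' ∈ ({a | CNF.Sat (extendAssign a) T} : Finset _) := fun a a' h => by
      simpa using (CNF.sat_extendAssign_congr ((sup_mono hsub).trans hT) hdisjC h).1
    have hstep := two_pow_mul_card_filter_sat (hTp C (mem_insert_self C T)) hCv _ hinv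
    rw [hk C (mem_insert_self C T), filter_filter] at hstep
    have hsat : satSet n (insert C T) = ↑({a | CNF.Sat (extendAssign a) T ∧
        Clause.Sat (extendAssign a) C} : Finset (Fin n → Bool)) := by
      ext a
      simp [satSet, CNF.Sat, and_comm]
    have ih' := ih (fun D hD => hTp D (hsub hD)) ((sup_mono hsub).trans hT)
      (fun D hD => hk D (hsub hD)) (hdisj.subset (coe_subset.2 hsub))
    rw [satSet_eq_coe_filter, Set.ncard_coe_finset] at ih'
    rw [hsat, Set.ncard_coe_finset, card_insert_of_notMem hCT]
    calc (2 ^ k) ^ (T.card + 1) *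
          #{a | CNF.Sat (extendAssign a) T ∧ Clause.Sat (extendAssign a) C}
        = (2 ^ k) ^ T.card *
            (2 ^ k * #{a | CNF.Sat (extendAssign a) T ∧ Clause.Sat (extendAssign a) C}) := by ring
      _ = (2 ^ k - 1) * ((2 ^ k) ^ T.card * #{a | CNF.Sat (extendAssign a) T}) := by
        rw [hstep]; ring
      _ = (2 ^ k - 1) ^ (T.card + 1) * 2 ^ n := by rw [ih']; ring

theorem pow_natCeil_log_div_log_le {b x : ℝ} (hb₀ : 0 < b) (hb₁ : b < 1) (hx : 0 < x) :
    b ^ ⌈Real.log x / Real.log b⌉₊ ≤ x := by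
  calc b ^ ⌈Real.log x / Real.log b⌉₊ = b ^ (⌈Real.logb b x⌉₊ : ℝ) := (Real.rpow_natCast _ _).symm
    _ ≤ b ^ Real.logb b x := Real.rpow_le_rpow_of_exponent_ge hb₀ hb₁.le (Nat.le_ceil _)
    _ = x := Real.rpow_logb hb₀ hb₁.ne hx

theorem disjoint_clauses_refutation_under_big_promise_general (ε : ℝ) (hε0 : 0 < ε) :
    ∃ p : Polynomial ℕ, ∃ n₀ : ℕ, ∀ n ≥ n₀, ∀ T : CNF,
      Is3CNF T → CNF.vars T ⊆ Finset.range n →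
      T.card = ⌈Real.log (ε / 2) / Real.log (7 / 8)⌉₊ →
      (∀ C₁ ∈ T, ∀ C₂ ∈ T, C₁ ≠ C₂ → Disjoint (Clause.vars C₁) (Clause.vars C₂)) →
      ∃ A : CNF, CNF.Proper A ∧
        ((discardedSet n A).ncard : ℝ) ≤ ε * 2 ^ n ∧
        ∃ L : List Clause, IsResRefutation (T ∪ A) L ∧ L.length ≤ p.eval n := by
  refine ⟨Polynomial.C (10 * ⌈Real.log (ε / 2) / Real.log (7 / 8)⌉₊ + 2), 0,
    fun n _ T h3 hT hcard hdisj => ?_⟩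
  have hTp : T.Proper := fun C hC =>
    Clause.proper_of_card_vars ((h3 C hC).2.trans (h3 C hC).1.symm)
  obtain ⟨L, hL, hlen⟩ := exists_isResRefutation_negTseitin hTp hT fun C hC => (h3 C hC).1.le
  refine ⟨negTseitin n T, negTseitin_proper hTp hT, ?_, L, hL, by simpa [hcard] using hlen⟩
  have hsat : (8 : ℝ) ^ T.card * (satSet n T).ncard = 7 ^ T.card * 2 ^ n := by
    exact_mod_cast two_pow_pow_mul_ncard_satSet hTp hT (fun C hC => (h3 C hC).2) hdisj
  have hdisc : (discardedSet n (negTseitin n T)).ncard ≤ (satSet n T).ncard :=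
    Set.ncard_le_ncard (discardedSet_negTseitin_subset hT) (Set.toFinite _)
  calc ((discardedSet n (negTseitin n T)).ncard : ℝ)
      ≤ (satSet n T).ncard := by exact_mod_cast hdisc
    _ = (7 / 8) ^ T.card * 2 ^ n := by
      rw [div_pow, div_mul_eq_mul_div, eq_div_iff (by positivity), ← hsat, mul_comm]
    _ ≤ ε / 2 * 2 ^ n := by
      rw [hcard]
      gcongr
      exact pow_natCeil_log_div_log_le (by norm_num) (by norm_num) (by positivity)
    _ ≤ ε * 2 ^ n := by gcongr; linarith

/-- for the constant c = 3⌈log_{7/8}(ε/2)⌉ and all large n, any 3CNF `T`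
consisting of c/3 pairwise variable-disjoint clauses over X = {x_1,…,x_n} can be
refuted in polynomial size after discarding at most ε·2ⁿ assignments. -/
theorem disjoint_clauses_refutation_under_big_promise (ε : ℝ) (hε0 : 0 < ε) (hε1 : ε < 1) :
    ∃ p : Polynomial ℕ, ∃ n₀ : ℕ, ∀ n ≥ n₀, ∀ T : CNF,
      Is3CNF T → CNF.vars T ⊆ Finset.range n →
      T.card = ⌈Real.log (ε / 2) / Real.log (7 / 8)⌉₊ →
      (∀ C₁ ∈ T, ∀ C₂ ∈ T, C₁ ≠ C₂ → Disjoint (Clause.vars C₁) (Clause.vars C₂)) →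
      ∃ A : CNF, CNF.Proper A ∧
        ((discardedSet n A).ncard : ℝ) ≤ ε * 2 ^ n ∧
        ∃ L : List Clause, IsResRefutation (T ∪ A) L ∧ L.length ≤ p.eval n :=
  disjoint_clauses_refutation_under_big_promise_general ε hε0
end

section
/- Let 0 < δ < 1 and 0 < ϵ < 1/2 be constants and let β = n^{1/2−ϵ}. There exists n₀ (depending only on δ and ϵ) such that for all n ≥ n₀: if K is a 3CNF formula over n variables that is partially matchable, then every sub-collection K' ⊆ K with |K'| ≤ 2n·(80β)^{−2/(1−ϵ)} has more than 2^{δn} satisfying assignments in {0,1}^n. -/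
/-!
Partial matchability of `K` is Hall's condition for the clause–variable incidence of every small
sub-collection `K'`, so each clause of `K'` can be satisfied through a variable of its own.
Fixing these `#K'` variables leaves `2 ^ (n - #K')` satisfying assignments, and
`#K' ≤ 2n(80β)^{-2/(1-ϵ)} ≤ 2n^{ϵ/(1-ϵ)} = o(n)` because `ϵ < 1/2`.
-/

open scoped Classical

open Finset Filter Topology

lemma ncard_setOf_eqOn_eq {ι β : Type*} [Fintype ι] [DecidableEq ι] [Fintype β]
    (S : Finset ι) (g : ι → β) :
    {b : ι → β | Set.EqOn b g S}.ncard = Fintype.card β ^ (Fintype.card ι - #S) := by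
  have hpi : {b : ι → β | Set.EqOn b g S} =
      ↑(Fintype.piFinset fun i => if i ∈ S then {g i} else univ) := by
    ext b
    simp only [Set.mem_ofPred_eq, Set.EqOn, mem_coe, Fintype.mem_piFinset]
    refine ⟨fun h i => ?_, fun h i hi => ?_⟩
    · split_ifs with hi
      · simp [h hi]
      · exact mem_univ _
    · simpa [hi] using h i
  rw [hpi, Set.ncard_coe_finset, Fintype.card_piFinset]
  simp only [apply_ite Finset.card, card_singleton, card_univ, prod_ite, prod_const_one, one_mul,
    prod_const]
  rw [filter_not, card_sdiff, filter_mem_eq_inter, univ_inter, card_univ]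
  simp

lemma Clause.vars_subset_vars {C : Clause} {K : CNF} (hC : C ∈ K) : C.vars ⊆ K.vars :=
  le_sup (f := Clause.vars) hC

lemma CNF.vars_mono {K' K : CNF} (h : K' ⊆ K) : K'.vars ⊆ K.vars :=
  sup_mono h

lemma CNF.vars_image_val {K : CNF} (s : Finset K) :
    CNF.vars (s.image Subtype.val) = s.biUnion fun C => C.1.vars := by
  rw [CNF.vars, sup_eq_biUnion, image_biUnion]

lemma CNF.exists_injective_lit_of_card_le_card_vars {K : CNF}
    (hK : ∀ K' ⊆ K, #K' ≤ #K'.vars) :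
    ∃ l : K → Lit, Function.Injective (Prod.fst ∘ l) ∧ ∀ C, l C ∈ C.1 := by
  have hall : ∀ s : Finset K, #s ≤ #(s.biUnion fun C => C.1.vars) := fun s => by
    rw [← CNF.vars_image_val, ← card_image_of_injective s Subtype.val_injective]
    exact hK _ fun C hC => by obtain ⟨D, -, rfl⟩ := mem_image.1 hC; exact D.2
  obtain ⟨f, hf, hfC⟩ := (all_card_le_biUnion_card_iff_exists_injective _).1 hall
  have hlit : ∀ C : K, ∃ b, (f C, b) ∈ C.1 := fun C => by
    obtain ⟨l, hl, hlf⟩ := mem_image.1 (hfC C)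
    exact ⟨l.2, hlf ▸ hl⟩
  choose p hp using hlit
  exact ⟨fun C => (f C, p C), hf, hp⟩

lemma Lit.eval_eq_true_of_apply_fst_eq {a : Assignment} {l : Lit} (h : a l.1 = l.2) :
    l.eval a = true := by
  obtain ⟨v, _ | _⟩ := l <;> simp_all [Lit.eval]

lemma CNF.two_pow_sub_card_le_ncard_satSet {K : CNF} {n : ℕ}
    (hK : ∀ K' ⊆ K, #K' ≤ #K'.vars) (hvars : K.vars ⊆ range n) :
    2 ^ (n - #K) ≤ (satSet n K).ncard := by
  obtain ⟨l, hl, hlC⟩ := CNF.exists_injective_lit_of_card_le_card_vars hK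
  have hlt : ∀ C : K, (l C).1 < n := fun C =>
    mem_range.1 (hvars (Clause.vars_subset_vars C.2 (mem_image_of_mem _ (hlC C))))
  set F : K → Fin n := fun C => ⟨(l C).1, hlt C⟩
  have hF : Function.Injective F := fun C D h => hl (congrArg Fin.val h)
  set g : Fin n → Bool := Function.extend F (fun C => (l C).2) fun _ => false
  have hsub : {b : Fin n → Bool | Set.EqOn b g ↑(univ.image F)} ⊆ satSet n K := by
    intro b hb C hC
    refine ⟨l ⟨C, hC⟩, hlC _, Lit.eval_eq_true_of_apply_fst_eq ?_⟩
    have hbF : b (F ⟨C, hC⟩) = (l ⟨C, hC⟩).2 :=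
      (hb (mem_image_of_mem _ (mem_univ _))).trans (hF.extend_apply _ _ _)
    simpa [extendAssign, hlt] using hbF
  calc 2 ^ (n - #K) = {b : Fin n → Bool | Set.EqOn b g ↑(univ.image F)}.ncard := by
        rw [ncard_setOf_eqOn_eq, card_image_of_injective _ hF]; simp
    _ ≤ (satSet n K).ncard := Set.ncard_le_ncard hsub (Set.toFinite _)

/-- The paper's size bound `2n·(80β)^{-2/(1-ϵ)}` with `β = n^{1/2-ϵ}`. -/
noncomputable def partialMatchBound (ϵ : ℝ) (n : ℕ) : ℝ :=
  2 * n * (80 * (n : ℝ) ^ ((1 : ℝ) / 2 - ϵ)) ^ (-(2 : ℝ) / (1 - ϵ))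

lemma partialMatchBound_le {ϵ : ℝ} (hϵ : ϵ < 1) {n : ℕ} (hn : 0 < n) :
    partialMatchBound ϵ n ≤ 2 * (n : ℝ) ^ (ϵ / (1 - ϵ)) := by
  have hx : (0 : ℝ) < n := Nat.cast_pos.2 hn
  have hexp : 1 + ((1 : ℝ) / 2 - ϵ) * (-2 / (1 - ϵ)) = ϵ / (1 - ϵ) := by
    field_simp [(sub_pos.2 hϵ).ne']; ring
  have h80 : (80 : ℝ) ^ (-(2 : ℝ) / (1 - ϵ)) ≤ 1 :=
    Real.rpow_le_one_of_one_le_of_nonpos (by norm_num)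
      (div_nonpos_of_nonpos_of_nonneg (by norm_num) (sub_pos.2 hϵ).le)
  calc partialMatchBound ϵ n
      = 2 * (80 : ℝ) ^ (-(2 : ℝ) / (1 - ϵ)) *
          (n : ℝ) ^ (1 + ((1 : ℝ) / 2 - ϵ) * (-2 / (1 - ϵ))) := by
        rw [partialMatchBound, Real.mul_rpow (by norm_num) (by positivity), ← Real.rpow_mul hx.le,
          Real.rpow_add hx, Real.rpow_one, neg_div]
        ring
    _ ≤ 2 * 1 * (n : ℝ) ^ (ϵ / (1 - ϵ)) := by rw [hexp]; gcongr
    _ = 2 * (n : ℝ) ^ (ϵ / (1 - ϵ)) := by ring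

lemma eventually_mul_add_mul_rpow_lt {α δ : ℝ} (hα : α < 1) (hδ : δ < 1) (c : ℝ) :
    ∀ᶠ x : ℝ in atTop, δ * x + c * x ^ α < x := by
  have hlim : Tendsto (fun x : ℝ => c * x ^ (-(1 - α))) atTop (𝓝 0) := by
    simpa using (tendsto_rpow_neg_atTop (sub_pos.2 hα)).const_mul c
  filter_upwards [hlim.eventually (gt_mem_nhds (sub_pos.2 hδ)), eventually_gt_atTop 0]
    with x hsmall hx
  have hsplit : c * x ^ α = c * x ^ (-(1 - α)) * x := by
    rw [mul_assoc, ← Real.rpow_add_one hx.ne']; ring_nf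
  rw [hsplit]
  nlinarith

lemma eventually_mul_add_partialMatchBound_lt {δ ϵ : ℝ} (hδ : δ < 1) (hϵ : ϵ < 1 / 2) :
    ∀ᶠ n : ℕ in atTop, δ * n + partialMatchBound ϵ n < n := by
  have hα : ϵ / (1 - ϵ) < 1 := by rw [div_lt_one (by linarith)]; linarith
  filter_upwards [tendsto_natCast_atTop_atTop.eventually (eventually_mul_add_mul_rpow_lt hα hδ 2),
    eventually_gt_atTop 0] with n hlt hn
  linarith [partialMatchBound_le (by linarith : ϵ < 1) hn]

theorem partially_matchable_many_sat_general (δ ϵ : ℝ) (hδ1 : δ < 1)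
    (hϵ1 : ϵ < 1 / 2) :
    ∃ n₀ : ℕ, ∀ n ≥ n₀, ∀ K : CNF, Is3CNF K → CNF.vars K ⊆ Finset.range n →
      (∀ K' : CNF, K' ⊆ K →
        (K'.card : ℝ) ≤
            2 * n * (80 * (n : ℝ) ^ ((1 : ℝ) / 2 - ϵ)) ^ (-(2 : ℝ) / (1 - ϵ)) →
        K'.card ≤ (CNF.vars K').card) →
      ∀ K' : CNF, K' ⊆ K →
        (K'.card : ℝ) ≤
            2 * n * (80 * (n : ℝ) ^ ((1 : ℝ) / 2 - ϵ)) ^ (-(2 : ℝ) / (1 - ϵ)) →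
        (2 : ℝ) ^ (δ * n) < ((satSet n K').ncard : ℝ) := by
  obtain ⟨n₀, hn₀⟩ := eventually_atTop.1 (eventually_mul_add_partialMatchBound_lt hδ1 hϵ1)
  refine ⟨n₀, fun n hn K _ hvars hmatch K' hK' hcard => ?_⟩
  have hvars' : K'.vars ⊆ range n := (CNF.vars_mono hK').trans hvars
  have hhall : ∀ K'' ⊆ K', #K'' ≤ #K''.vars := fun K'' hK'' =>
    hmatch K'' (hK''.trans hK') ((Nat.cast_le.2 (card_le_card hK'')).trans hcard)
  have hfree : δ * n < (n - #K' : ℕ) := by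
    have hKn : #K' ≤ n :=
      (hhall K' subset_rfl).trans ((card_le_card hvars').trans_eq (card_range n))
    push_cast [hKn]
    linarith [hn₀ n hn, show (#K' : ℝ) ≤ partialMatchBound ϵ n from hcard]
  have hsat := CNF.two_pow_sub_card_le_ncard_satSet hhall hvars'
  calc (2 : ℝ) ^ (δ * n) < 2 ^ ((n - #K' : ℕ) : ℝ) :=
        Real.rpow_lt_rpow_of_exponent_lt one_lt_two hfree
    _ ≤ (satSet n K').ncard := by rw [Real.rpow_natCast]; exact_mod_cast hsat

/-- for large n, every small sub-collection of a partially matchable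
3CNF over n variables has more than 2^{δn} satisfying assignments. -/
theorem partially_matchable_many_sat (δ ϵ : ℝ) (hδ0 : 0 < δ) (hδ1 : δ < 1)
    (hϵ0 : 0 < ϵ) (hϵ1 : ϵ < 1 / 2) :
    ∃ n₀ : ℕ, ∀ n ≥ n₀, ∀ K : CNF, Is3CNF K → CNF.vars K ⊆ Finset.range n →
      (∀ K' : CNF, K' ⊆ K →
        (K'.card : ℝ) ≤
            2 * n * (80 * (n : ℝ) ^ ((1 : ℝ) / 2 - ϵ)) ^ (-(2 : ℝ) / (1 - ϵ)) →
        K'.card ≤ (CNF.vars K').card) →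
      ∀ K' : CNF, K' ⊆ K →
        (K'.card : ℝ) ≤
            2 * n * (80 * (n : ℝ) ^ ((1 : ℝ) / 2 - ϵ)) ^ (-(2 : ℝ) / (1 - ϵ)) →
        (2 : ℝ) ^ (δ * n) < ((satSet n K').ncard : ℝ) :=
  partially_matchable_many_sat_general δ ϵ hδ1 hϵ1
end

section
/- Let K be a CNF formula over n variables with m clauses such that every sub-collection K'' ⊆ K satisfies |Vars(K'')| ≥ |K''| (where |K''| is the number of clauses of K''). Then there is an injective map assigning to each clause of K a variable occurring in that clause; consequently there is a truth assignment fixing at most m variables that satisfies K, and hence at least 2^{n−m} of the 2^n truth assignments satisfy K. -/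
open scoped Classical

/-!
Hall's marriage theorem, applied to the family of variable sets of the clauses, turns the
hypothesis on sub-collections into a system of distinct representatives: an injective choice
of one variable `g C` in each clause `C`. Since the representatives are distinct, they can be
set independently so that each clause `C` is satisfied by its literal on `g C`; these at most
`m` values force `K`, and the remaining `n - m` (or more) variables among `0, …, n-1` are free.
-/

theorem Lit.eval_eq_true_iff {a : Assignment} {l : Lit} : l.eval a = true ↔ a l.1 = l.2 := by
  obtain ⟨v, _ | _⟩ := l <;> cases h : a v <;> simp [Lit.eval, h]

theorem CNF.mem_vars_s14 {K : CNF} {v : Var} : v ∈ K.vars ↔ ∃ C ∈ K, v ∈ C.vars :=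
  Finset.mem_sup

theorem CNF.exists_injOn_mem_vars {K : CNF}
    (hhall : ∀ K' : CNF, K' ⊆ K → K'.card ≤ K'.vars.card) :
    ∃ g : Clause → Var, Set.InjOn g K ∧ ∀ C ∈ K, g C ∈ C.vars := by
  have hmarriage (s : Finset K) : s.card ≤ (s.biUnion fun C => C.1.vars).card := by
    set K' : CNF := s.map (Function.Embedding.subtype _)
    have hK' : K' ⊆ K := fun C hC => by
      obtain ⟨⟨C, h⟩, -, rfl⟩ := Finset.mem_map.mp hC
      exact h
    have hvars : K'.vars = s.biUnion fun C => C.1.vars := by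
      ext v
      simp [K', CNF.mem_vars_s14]
    simpa [K', hvars] using hhall K' hK'
  obtain ⟨f, hinj, hmem⟩ :=
    (Finset.all_card_le_biUnion_card_iff_exists_injective _).mp hmarriage
  refine ⟨fun C => if h : C ∈ K then f ⟨C, h⟩ else 0, fun C hC D hD hCD => ?_,
    fun C hC => ?_⟩
  · simp only [dif_pos (Finset.mem_coe.mp hC), dif_pos (Finset.mem_coe.mp hD)] at hCD
    exact congrArg Subtype.val (hinj hCD)
  · simpa [dif_pos hC] using hmem ⟨C, hC⟩

theorem CNF.exists_forcing_assignment {K : CNF} {g : Clause → Var} (hg : Set.InjOn g K)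
    (hmem : ∀ C ∈ K, g C ∈ C.vars) :
    ∃ a : Assignment, ∀ b : Assignment, (∀ v ∈ K.image g, b v = a v) → CNF.Sat b K := by
  choose! lit hlit hfst using fun C hC => Finset.mem_image.mp (hmem C hC)
  refine ⟨fun v => (lit (Function.invFunOn g K v)).2,
    fun b hb C hC => ⟨lit C, hlit C hC, ?_⟩⟩
  rw [Lit.eval_eq_true_iff, hfst C hC, hb _ (Finset.mem_image_of_mem g hC)]
  exact congrArg (fun C => (lit C).2) (hg.leftInvOn_invFunOn hC)

theorem card_filter_eqOn {ι : Type*} [Fintype ι] [DecidableEq ι] (T : Finset ι)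
    (c₀ : ι → Bool) :
    (Finset.univ.filter fun c : ι → Bool => ∀ i ∈ T, c i = c₀ i).card
      = 2 ^ (Fintype.card ι - T.card) := by
  have hpi : (Finset.univ.filter fun c : ι → Bool => ∀ i ∈ T, c i = c₀ i)
      = Fintype.piFinset fun i => if i ∈ T then {c₀ i} else Finset.univ := by
    ext c; simp only [Finset.mem_filter, Finset.mem_univ, true_and, Fintype.mem_piFinset]
    refine forall_congr' fun i => ?_
    split_ifs <;> simp [*]
  rw [hpi, Fintype.card_piFinset]
  simp only [apply_ite Finset.card, Finset.card_singleton, Finset.card_univ, Fintype.card_bool]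
  rw [Finset.prod_ite, Finset.filter_not]
  simp [Finset.card_sdiff]

theorem two_pow_le_ncard_satSet {n : ℕ} {K : CNF} {S : Finset Var} {a : Assignment}
    (hS : S ⊆ Finset.range n)
    (hforce : ∀ b : Assignment, (∀ v ∈ S, b v = a v) → CNF.Sat b K) :
    2 ^ (n - S.card) ≤ (satSet n K).ncard := by
  set T : Finset (Fin n) := Finset.univ.filter fun i => (i : ℕ) ∈ S
  have hT : T.card ≤ S.card := Finset.card_le_card_of_injOn Fin.val
    (fun i hi => (Finset.mem_filter.mp hi).2) Fin.val_injective.injOn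
  set F : Finset (Fin n → Bool) := Finset.univ.filter fun c => ∀ i ∈ T, c i = a i
  have hsub : ↑F ⊆ satSet n K := by
    intro c hc
    refine hforce _ fun v hv => ?_
    have hv' : v < n := Finset.mem_range.mp (hS hv)
    simp [extendAssign, hv', (Finset.mem_filter.mp hc).2 ⟨v, hv'⟩ (by simp [T, hv])]
  calc 2 ^ (n - S.card) ≤ 2 ^ (n - T.card) := Nat.pow_le_pow_right two_pos (by omega)
    _ = F.card := by
      -- the two sides differ only in their decidability instances
      convert (card_filter_eqOn T fun i => a i).symm using 3
      exact (Fintype.card_fin n).symm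
    _ ≤ _ := by rw [← Set.ncard_coe_finset]; exact Set.ncard_le_ncard hsub

/-- Hall-type matching for CNFs: if every sub-collection K'' ⊆ K has at
least as many variables as clauses, then there is a system of distinct
representative variables, a satisfying partial assignment fixing at most m
variables, and hence at least 2^{n−m} satisfying assignments. -/
theorem hall_matching_sat (n m : ℕ) (K : CNF) (hvars : CNF.vars K ⊆ Finset.range n)
    (hcard : K.card = m)
    (hhall : ∀ K'' : CNF, K'' ⊆ K → K''.card ≤ (CNF.vars K'').card) :
    (∃ g : Clause → Var, Set.InjOn g (K : Set Clause) ∧ ∀ C ∈ K, g C ∈ Clause.vars C) ∧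
    (∃ (S : Finset Var) (a : Assignment), S.card ≤ m ∧
      ∀ b : Assignment, (∀ v ∈ S, b v = a v) → CNF.Sat b K) ∧
    2 ^ (n - m) ≤ (satSet n K).ncard := by
  obtain ⟨g, hinj, hmem⟩ := CNF.exists_injOn_mem_vars hhall
  obtain ⟨a, hforce⟩ := CNF.exists_forcing_assignment hinj hmem
  have hS : (K.image g).card ≤ m := hcard ▸ Finset.card_image_le
  have hSn : K.image g ⊆ Finset.range n := fun v hv => by
    obtain ⟨C, hC, rfl⟩ := Finset.mem_image.mp hv
    exact hvars (CNF.mem_vars_s14.mpr ⟨C, hC, hmem C hC⟩)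
  refine ⟨⟨g, hinj, hmem⟩, ⟨K.image g, a, hS, hforce⟩, ?_⟩
  calc 2 ^ (n - m) ≤ 2 ^ (n - (K.image g).card) := Nat.pow_le_pow_right two_pos (by omega)
    _ ≤ _ := two_pow_le_ncard_satSet hSn hforce
end

section
/- Let K and A be CNF formulas (over possibly overlapping sets of variables) such that K ∪ A is unsatisfiable. For a clause D define μ(D) := min{ |K'| : K' ⊆ K and every truth assignment (to all variables) satisfying A ∪ K' satisfies D }, where |K'| is the number of clauses of K'. Let k ≥ 2 be an integer and suppose μ(□) ≥ k, where □ is the empty clause. Then every resolution refutation of K ∪ A contains a clause D with k/2 ≤ μ(D) < k. -/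
open scoped Classical

/-- μ(D): the minimal number of clauses of a sub-collection K' ⊆ K such that every
assignment satisfying A ∪ K' satisfies D. -/
noncomputable def muMeasure (K A : CNF) (D : Clause) : ℕ :=
  sInf {m : ℕ | ∃ K' : CNF, K' ⊆ K ∧
    (∀ a : Assignment, CNF.Sat a (A ∪ K') → Clause.Sat a D) ∧ K'.card = m}

/-!
Along a refutation μ is at most 1 on axioms (0 on those of A), reaches μ(□) ≥ k at the end,
does not grow under weakening and is subadditive under resolution. So the first clause with
μ ≥ k/2 is not an axiom, and it comes from premises with μ < k/2, hence has μ < k.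
-/

theorem List.exists_getElem_and_forall_take_not {α : Type*} {p : α → Prop} :
    ∀ {L : List α}, (∃ x ∈ L, p x) →
      ∃ (i : ℕ) (hi : i < L.length), p L[i] ∧ ∀ y ∈ L.take i, ¬p y
  | [], ⟨_, hx, _⟩ => absurd hx List.not_mem_nil
  | a :: L, ⟨x, hx, hpx⟩ => by
    by_cases hpa : p a
    · exact ⟨0, by simp, hpa, by simp⟩
    · have hxL : x ∈ L := (List.mem_cons.mp hx).resolve_left (by rintro rfl; exact hpa hpx)
      obtain ⟨i, hi, hpi, hbefore⟩ := exists_getElem_and_forall_take_not ⟨x, hxL, hpx⟩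
      refine ⟨i + 1, by simpa using hi, hpi, ?_⟩
      rw [List.take_succ_cons]
      rintro y (_ | ⟨_, hy⟩)
      exacts [hpa, hbefore y hy]

theorem CNF.sat_union {a : Assignment} {P Q : CNF} :
    CNF.Sat a (P ∪ Q) ↔ CNF.Sat a P ∧ CNF.Sat a Q := by
  simp only [CNF.Sat, Finset.mem_union, or_imp, forall_and]

theorem Clause.Sat.mono {a : Assignment} {C D : Clause} (h : Clause.Sat a C) (hCD : C ⊆ D) :
    Clause.Sat a D :=
  let ⟨l, hl, he⟩ := h
  ⟨l, hCD hl, he⟩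

theorem Clause.Sat.resolvent {a : Assignment} {C₁ C₂ : Clause} (x : Var)
    (h₁ : Clause.Sat a C₁) (h₂ : Clause.Sat a C₂) :
    Clause.Sat a (C₁.erase (x, true) ∪ C₂.erase (x, false)) := by
  cases hax : a x
  · obtain ⟨l, hl, he⟩ := h₁
    have hne : l ≠ (x, true) := by rintro rfl; simp [Lit.eval, hax] at he
    exact ⟨l, Finset.mem_union_left _ (Finset.mem_erase.mpr ⟨hne, hl⟩), he⟩
  · obtain ⟨l, hl, he⟩ := h₂
    have hne : l ≠ (x, false) := by rintro rfl; simp [Lit.eval, hax] at he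
    exact ⟨l, Finset.mem_union_right _ (Finset.mem_erase.mpr ⟨hne, hl⟩), he⟩

namespace muMeasure

variable {K A : CNF}

theorem le_card {D : Clause} {K' : CNF} (hK' : K' ⊆ K)
    (hD : ∀ a : Assignment, CNF.Sat a (A ∪ K') → Clause.Sat a D) :
    muMeasure K A D ≤ K'.card :=
  Nat.sInf_le ⟨K', hK', hD, rfl⟩

theorem exists_card_eq (hunsat : CNF.Unsat (K ∪ A)) (D : Clause) :
    ∃ K' ⊆ K, (∀ a : Assignment, CNF.Sat a (A ∪ K') → Clause.Sat a D) ∧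
      K'.card = muMeasure K A D :=
  (Nat.sInf_mem ⟨K.card, K, subset_rfl,
    fun a ha => (hunsat ⟨a, Finset.union_comm A K ▸ ha⟩).elim, rfl⟩ : muMeasure K A D ∈ _)

theorem anti (hunsat : CNF.Unsat (K ∪ A)) {E D : Clause} (hED : E ⊆ D) :
    muMeasure K A D ≤ muMeasure K A E := by
  obtain ⟨K', hK', hE, hcard⟩ := exists_card_eq hunsat E
  exact hcard ▸ le_card hK' fun a ha => (hE a ha).mono hED

theorem le_one_of_mem {D : Clause} (hD : D ∈ K) : muMeasure K A D ≤ 1 :=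
  le_card (Finset.singleton_subset_iff.mpr hD)
    fun _ ha => ha D (Finset.mem_union_right _ (Finset.mem_singleton_self D))

theorem eq_zero_of_mem {D : Clause} (hD : D ∈ A) : muMeasure K A D = 0 :=
  Nat.le_zero.mp <| le_card (Finset.empty_subset K) fun _ ha => ha D (Finset.mem_union_left _ hD)

theorem resolvent_le (hunsat : CNF.Unsat (K ∪ A)) (C₁ C₂ : Clause) (x : Var) :
    muMeasure K A (C₁.erase (x, true) ∪ C₂.erase (x, false)) ≤
      muMeasure K A C₁ + muMeasure K A C₂ := by
  obtain ⟨K₁, hK₁, hC₁, hcard₁⟩ := exists_card_eq hunsat C₁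
  obtain ⟨K₂, hK₂, hC₂, hcard₂⟩ := exists_card_eq hunsat C₂
  have hres : ∀ a : Assignment, CNF.Sat a (A ∪ (K₁ ∪ K₂)) →
      Clause.Sat a (C₁.erase (x, true) ∪ C₂.erase (x, false)) := by
    intro a ha
    obtain ⟨hA, hsat₁, hsat₂⟩ : CNF.Sat a A ∧ CNF.Sat a K₁ ∧ CNF.Sat a K₂ := by
      simpa only [CNF.sat_union] using ha
    exact (hC₁ a (CNF.sat_union.mpr ⟨hA, hsat₁⟩)).resolvent x
      (hC₂ a (CNF.sat_union.mpr ⟨hA, hsat₂⟩))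
  calc _ ≤ (K₁ ∪ K₂).card := le_card (Finset.union_subset hK₁ hK₂) hres
    _ ≤ K₁.card + K₂.card := Finset.card_union_le _ _
    _ = _ := by rw [hcard₁, hcard₂]

theorem le_of_resStep (hunsat : CNF.Unsat (K ∪ A)) {prev : List Clause} {D : Clause} {m : ℕ}
    (hstep : ResStep (K ∪ A) prev D) (hprev : ∀ E ∈ prev, muMeasure K A E ≤ m) :
    muMeasure K A D ≤ max 1 (2 * m) := by
  rcases hstep with hax | ⟨E, hE, hED⟩ | ⟨C₁, hC₁, C₂, hC₂, x, -, -, rfl, -, -⟩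
  · rcases Finset.mem_union.mp hax with hK | hA
    · exact (le_one_of_mem hK).trans (le_max_left _ _)
    · exact (eq_zero_of_mem hA).trans_le (Nat.zero_le _)
  · have := anti hunsat hED
    have := hprev E hE
    omega
  · have := resolvent_le hunsat C₁ C₂ x
    have := hprev C₁ hC₁
    have := hprev C₂ hC₂
    omega

end muMeasure

theorem medium_complexity_clause_general (K A : CNF) (hunsat : CNF.Unsat (K ∪ A))
    (k : ℕ) (hk : 2 ≤ k) (hmu : k ≤ muMeasure K A ∅) :
    ∀ L : List Clause, IsResRefutation (K ∪ A) L →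
      ∃ D ∈ L, k ≤ 2 * muMeasure K A D ∧ muMeasure K A D < k := by
  rintro L ⟨-, hlast, hsteps⟩
  obtain ⟨i, hi, hhalf, hbefore⟩ := List.exists_getElem_and_forall_take_not
    (p := fun D => k ≤ 2 * muMeasure K A D) ⟨∅, List.mem_of_getLast? hlast, by omega⟩
  refine ⟨L[i], List.getElem_mem hi, hhalf, ?_⟩
  have hstep := muMeasure.le_of_resStep (m := (k - 1) / 2) hunsat (hsteps ⟨i, hi⟩).2
    fun E hE => by have := hbefore E hE; omega
  simp only [List.get_eq_getElem] at hstep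
  omega

/-- if μ(□) ≥ k then every resolution refutation of K ∪ A contains a
clause D with k/2 ≤ μ(D) < k. -/
theorem medium_complexity_clause (K A : CNF) (hKprop : CNF.Proper K) (hAprop : CNF.Proper A)
    (hunsat : CNF.Unsat (K ∪ A)) (k : ℕ) (hk : 2 ≤ k) (hmu : k ≤ muMeasure K A ∅) :
    ∀ L : List Clause, IsResRefutation (K ∪ A) L →
      ∃ D ∈ L, k ≤ 2 * muMeasure K A D ∧ muMeasure K A D < k :=
  medium_complexity_clause_general K A hunsat k hk hmu
end
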